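/- arXiv:1711.04261 — 5 statements merged into one kernel-verified Lean document; each statement's English description precedes it below -/
import Mathlib

section
/- Let 𝕜 be a commutative unital ring and let R be a unital 𝕜-algebra with an idempotent e satisfying e ≠ 0 and e ≠ 1; put f = 1 − e, A = eRe, B = fRf, M = eRf, N = fRe. A sequence τ = {τ_k}_{k∈ℕ} of 𝕜-linear maps on R satisfies τ_k(R) ⊆ Z(R) and τ_k([x,y]) = 0 for all x, y ∈ R and all k ∈ ℕ, if and only if for every k ∈ ℕ the following hold: τ_k(M) = {0} and τ_k(N) = {0}; τ_k(A) ⊆ Z(R) and τ_k(B) ⊆ Z(R); τ_k([a,a']) = 0 for all a, a' ∈ A and τ_k([b,b']) = 0 for all b, b' ∈ B; and τ_k(mn) = τ_k(nm) for all m ∈ M, n ∈ N. -/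
open Finset

section Defs

variable (𝕜 R : Type*) [CommRing 𝕜] [Ring R] [Algebra 𝕜 R]

/-- A higher derivation on a unital `𝕜`-algebra `R`: a sequence `D` of `𝕜`-linear maps
with `D 0 = id` and `D k (x*y) = ∑_{i+j=k} D i x * D j y`. -/
def IsHigherDerivation (D : ℕ → R →ₗ[𝕜] R) : Prop :=
  D 0 = LinearMap.id ∧
    ∀ (k : ℕ) (x y : R),
      D k (x * y) = ∑ ij ∈ Finset.HasAntidiagonal.antidiagonal k, D ij.1 x * D ij.2 y

/-- A Lie higher derivation on a unital `𝕜`-algebra `R`: a sequence `L` of `𝕜`-linear maps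
with `L 0 = id` and `L k [x,y] = ∑_{i+j=k} [L i x, L j y]`. -/
def IsLieHigherDerivation (L : ℕ → R →ₗ[𝕜] R) : Prop :=
  L 0 = LinearMap.id ∧
    ∀ (k : ℕ) (x y : R),
      L k (x * y - y * x) =
        ∑ ij ∈ Finset.HasAntidiagonal.antidiagonal k,
          (L ij.1 x * L ij.2 y - L ij.2 y * L ij.1 x)

/-- A Lie higher derivation `L` is proper if `L k = D k + τ k` (k ≥ 1) for some higher
derivation `D` and central-valued linear maps `τ k` vanishing on all commutators. -/
def IsProperLHD (L : ℕ → R →ₗ[𝕜] R) : Prop :=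
  ∃ D τ : ℕ → R →ₗ[𝕜] R,
    IsHigherDerivation 𝕜 R D ∧
      (∀ k, 1 ≤ k → ∀ x : R, τ k x ∈ Set.center R) ∧
      (∀ k, 1 ≤ k → ∀ x y : R, τ k (x * y - y * x) = 0) ∧
      (∀ k, 1 ≤ k → L k = D k + τ k)

/-- `R` has the LHD property: every Lie higher derivation on `R` is proper. -/
def HasLHDProperty : Prop :=
  ∀ L : ℕ → R →ₗ[𝕜] R, IsLieHigherDerivation 𝕜 R L → IsProperLHD 𝕜 R L

end Defs

section Peirce

variable {R : Type*} [Ring R]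

/-- The Peirce corner `eRf` of a ring `R`. -/
def corner (e f : R) : Set R := Set.range fun r => e * r * f

/-- The center of the corner algebra `eRe`:
elements of `eRe` commuting with every element of `eRe`. -/
def cornerCenter (e : R) : Set R :=
  {x ∈ corner e e | ∀ y ∈ corner e e, x * y = y * x}

/-- Weak faithfulness of the generalized matrix algebra determined by the idempotent `e`
(with `A = eRe`, `B = fRf`, `M = eRf`, `N = fRe`, `f = 1 - e`):
`aM = 0 = Na → a = 0` and `Mb = 0 = bN → b = 0`. -/
def WeaklyFaithful (e : R) : Prop :=
  (∀ a ∈ corner e e,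
      (∀ m ∈ corner e (1 - e), a * m = 0) →
        (∀ n ∈ corner (1 - e) e, n * a = 0) → a = 0) ∧
    ∀ b ∈ corner (1 - e) (1 - e),
      (∀ m ∈ corner e (1 - e), m * b = 0) →
        (∀ n ∈ corner (1 - e) e, b * n = 0) → b = 0

/-- The corner algebra `eRe` contains no nonzero central ideal: every two-sided ideal of
`eRe` contained in its center is zero. -/
def NoNonzeroCentralIdeal (e : R) : Prop :=
  ∀ I : Set R, I ⊆ cornerCenter e → (0 : R) ∈ I →
    (∀ x ∈ I, ∀ y ∈ I, x + y ∈ I) → (∀ x ∈ I, -x ∈ I) →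
    (∀ a ∈ corner e e, ∀ x ∈ I, a * x ∈ I ∧ x * a ∈ I) →
    ∀ x ∈ I, x = 0

/-- The corner algebra `eRe` is a domain. -/
def CornerDomain (e : R) : Prop :=
  ∀ x ∈ corner e e, ∀ y ∈ corner e e, x * y = 0 → x = 0 ∨ y = 0

/-- The `(eRe, fRf)`-bimodule `eRf` is strongly faithful: either it is faithful as a right
`fRf`-module and `am = 0 → a = 0 ∨ m = 0`, or it is faithful as a left `eRe`-module and
`mb = 0 → m = 0 ∨ b = 0`. -/
def StronglyFaithful (e f : R) : Prop :=
  ((∀ b ∈ corner f f, (∀ m ∈ corner e f, m * b = 0) → b = 0) ∧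
      ∀ a ∈ corner e e, ∀ m ∈ corner e f, a * m = 0 → a = 0 ∨ m = 0) ∨
    ((∀ a ∈ corner e e, (∀ m ∈ corner e f, a * m = 0) → a = 0) ∧
      ∀ m ∈ corner e f, ∀ b ∈ corner f f, m * b = 0 → m = 0 ∨ b = 0)

end Peirce

/-!
Decompose along `1 = e + f`: an element of `eRf` equals the commutator `[e, m]` and an element
of `fRe` equals `[n, e]`, so a map killing commutators kills both off-diagonal corners. Conversely,
if `τ` kills `M` and `N`, then `τ x = τ (exe) + τ (fxf)`, and the diagonal corners of `[x, y]` are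
`[exe, eye] + (exf)(fye) - (eyf)(fxe)` and `[fxf, fyf] + (fxe)(eyf) - (fye)(exf)`; the
conditions on `A`, `B` and on `τ (mn) = τ (nm)` make their images cancel.
-/

namespace IsIdempotentElem

variable {R : Type*} [Ring R] {e : R}

lemma commutator_eq_of_mem_corner (he : IsIdempotentElem e) {m : R}
    (hm : m ∈ corner e (1 - e)) : e * m - m * e = m := by
  obtain ⟨r, rfl⟩ := hm
  rw [← mul_assoc, ← mul_assoc, he.eq, mul_assoc _ (1 - e), he.one_sub_mul_self, mul_zero,
    sub_zero]

lemma corner_mul_eq (he : IsIdempotentElem e) (x y : R) :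
    e * (x * y) * e = e * x * e * (e * y * e) + e * x * (1 - e) * ((1 - e) * y * e) := by
  calc e * (x * y) * e = e * x * (e + (1 - e)) * y * e := by noncomm_ring
    _ = e * x * (e * e) * y * e + e * x * ((1 - e) * (1 - e)) * y * e := by
        rw [he.eq, he.one_sub.eq]; noncomm_ring
    _ = _ := by noncomm_ring

lemma corner_commutator_eq (he : IsIdempotentElem e) (x y : R) :
    e * (x * y - y * x) * e =
      (e * x * e * (e * y * e) - e * y * e * (e * x * e)) +
        (e * x * (1 - e) * ((1 - e) * y * e) - e * y * (1 - e) * ((1 - e) * x * e)) := by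
  rw [mul_sub, sub_mul, he.corner_mul_eq, he.corner_mul_eq]
  abel

end IsIdempotentElem

section Map

variable {R F : Type*} [Ring R] [FunLike F R R] {e : R} (τ : F)

lemma map_eq_zero_of_mem_corner_of_map_commutator (he : IsIdempotentElem e)
    (hτ : ∀ x y : R, τ (x * y - y * x) = 0) {m : R} (hm : m ∈ corner e (1 - e)) : τ m = 0 := by
  rw [← he.commutator_eq_of_mem_corner hm, hτ]

variable [AddMonoidHomClass F R R]

lemma map_eq_add_of_map_offDiag_eq_zero (hM : ∀ m ∈ corner e (1 - e), τ m = 0)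
    (hN : ∀ n ∈ corner (1 - e) e, τ n = 0) (z : R) :
    τ z = τ (e * z * e) + τ ((1 - e) * z * (1 - e)) := by
  have hz : z = e * z * e + e * z * (1 - e) + (1 - e) * z * e + (1 - e) * z * (1 - e) := by
    noncomm_ring
  conv_lhs => rw [hz]
  rw [map_add, map_add, map_add, hM _ ⟨z, rfl⟩, hN _ ⟨z, rfl⟩, add_zero, add_zero]

lemma map_commutator_eq_zero_of_corners (he : IsIdempotentElem e)
    (hM : ∀ m ∈ corner e (1 - e), τ m = 0) (hN : ∀ n ∈ corner (1 - e) e, τ n = 0)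
    (hA : ∀ a ∈ corner e e, ∀ a' ∈ corner e e, τ (a * a' - a' * a) = 0)
    (hB : ∀ b ∈ corner (1 - e) (1 - e), ∀ b' ∈ corner (1 - e) (1 - e),
      τ (b * b' - b' * b) = 0)
    (hMN : ∀ m ∈ corner e (1 - e), ∀ n ∈ corner (1 - e) e, τ (m * n) = τ (n * m))
    (x y : R) : τ (x * y - y * x) = 0 := by
  rw [map_eq_add_of_map_offDiag_eq_zero τ hM hN, he.corner_commutator_eq,
    he.one_sub.corner_commutator_eq, sub_sub_cancel]
  simp only [map_add, map_sub, hA _ ⟨x, rfl⟩ _ ⟨y, rfl⟩, hB _ ⟨x, rfl⟩ _ ⟨y, rfl⟩,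
    hMN _ ⟨x, rfl⟩ _ ⟨y, rfl⟩, hMN _ ⟨y, rfl⟩ _ ⟨x, rfl⟩]
  abel

theorem center_valued_and_map_commutator_iff (he : IsIdempotentElem e) :
    ((∀ x : R, τ x ∈ Set.center R) ∧ (∀ x y : R, τ (x * y - y * x) = 0)) ↔
      (∀ m ∈ corner e (1 - e), τ m = 0) ∧
        (∀ n ∈ corner (1 - e) e, τ n = 0) ∧
        (∀ a ∈ corner e e, τ a ∈ Set.center R) ∧
        (∀ b ∈ corner (1 - e) (1 - e), τ b ∈ Set.center R) ∧
        (∀ a ∈ corner e e, ∀ a' ∈ corner e e, τ (a * a' - a' * a) = 0) ∧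
        (∀ b ∈ corner (1 - e) (1 - e), ∀ b' ∈ corner (1 - e) (1 - e),
          τ (b * b' - b' * b) = 0) ∧
        (∀ m ∈ corner e (1 - e), ∀ n ∈ corner (1 - e) e, τ (m * n) = τ (n * m)) := by
  constructor
  · rintro ⟨hcenter, hcomm⟩
    refine ⟨fun m hm => map_eq_zero_of_mem_corner_of_map_commutator τ he hcomm hm,
      fun n hn => map_eq_zero_of_mem_corner_of_map_commutator τ he.one_sub hcomm ?_,
      fun a _ => hcenter a, fun b _ => hcenter b, fun a _ a' _ => hcomm a a',
      fun b _ b' _ => hcomm b b', fun m _ n _ => sub_eq_zero.mp (map_sub τ _ _ ▸ hcomm m n)⟩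
    rwa [sub_sub_cancel]
  · rintro ⟨hM, hN, hAc, hBc, hA, hB, hMN⟩
    refine ⟨fun x => ?_, map_commutator_eq_zero_of_corners τ he hM hN hA hB hMN⟩
    rw [map_eq_add_of_map_offDiag_eq_zero τ hM hN]
    exact Set.add_mem_center (hAc _ ⟨x, rfl⟩) (hBc _ ⟨x, rfl⟩)

end Map

theorem center_valued_characterization_general {𝕜 R : Type*} [CommRing 𝕜] [Ring R] [Algebra 𝕜 R]
    (e : R) (he : e * e = e)
    (τ : ℕ → R →ₗ[𝕜] R) :
    (∀ k, 1 ≤ k →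
        (∀ x : R, τ k x ∈ Set.center R) ∧ (∀ x y : R, τ k (x * y - y * x) = 0)) ↔
      (∀ k, 1 ≤ k →
        (∀ m ∈ corner e (1 - e), τ k m = 0) ∧
        (∀ n ∈ corner (1 - e) e, τ k n = 0) ∧
        (∀ a ∈ corner e e, τ k a ∈ Set.center R) ∧
        (∀ b ∈ corner (1 - e) (1 - e), τ k b ∈ Set.center R) ∧
        (∀ a ∈ corner e e, ∀ a' ∈ corner e e, τ k (a * a' - a' * a) = 0) ∧
        (∀ b ∈ corner (1 - e) (1 - e), ∀ b' ∈ corner (1 - e) (1 - e),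
          τ k (b * b' - b' * b) = 0) ∧
        (∀ m ∈ corner e (1 - e), ∀ n ∈ corner (1 - e) e, τ k (m * n) = τ k (n * m))) :=
  forall₂_congr fun k _ => center_valued_and_map_commutator_iff (τ k) he

/-- Proposition `center`, Peirce form. A sequence `τ` of `𝕜`-linear maps
on `R` (indexed by `k ≥ 1`) is central-valued and vanishes on commutators iff for every
`k ≥ 1`: `τ k` kills `eRf` and `fRe`, maps `eRe` and `fRf` into `Z(R)`, kills commutators
of `eRe` and of `fRf`, and satisfies `τ k (mn) = τ k (nm)` for `m ∈ eRf`, `n ∈ fRe`. -/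
theorem center_valued_characterization {𝕜 R : Type*} [CommRing 𝕜] [Ring R] [Algebra 𝕜 R]
    (e : R) (he : e * e = e) (he0 : e ≠ 0) (he1 : e ≠ 1)
    (τ : ℕ → R →ₗ[𝕜] R) :
    (∀ k, 1 ≤ k →
        (∀ x : R, τ k x ∈ Set.center R) ∧ (∀ x y : R, τ k (x * y - y * x) = 0)) ↔
      (∀ k, 1 ≤ k →
        (∀ m ∈ corner e (1 - e), τ k m = 0) ∧
        (∀ n ∈ corner (1 - e) e, τ k n = 0) ∧
        (∀ a ∈ corner e e, τ k a ∈ Set.center R) ∧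
        (∀ b ∈ corner (1 - e) (1 - e), τ k b ∈ Set.center R) ∧
        (∀ a ∈ corner e e, ∀ a' ∈ corner e e, τ k (a * a' - a' * a) = 0) ∧
        (∀ b ∈ corner (1 - e) (1 - e), ∀ b' ∈ corner (1 - e) (1 - e),
          τ k (b * b' - b' * b) = 0) ∧
        (∀ m ∈ corner e (1 - e), ∀ n ∈ corner (1 - e) e, τ k (m * n) = τ k (n * m))) :=
  center_valued_characterization_general e he τ
end

section
/- Let 𝕜 be a commutative unital ring and let R be a 2-torsion free unital 𝕜-algebra with an idempotent e satisfying e ≠ 0 and e ≠ 1; put f = 1 − e, A = eRe, B = fRf, M = eRf, N = fRe. Assume R is trivial in the sense that MN = {0} and NM = {0}, that R is weakly faithful, and that Z(A) = Z(R)e and Z(B) = Z(R)f. Then R has the LHD property, i.e., every Lie higher derivation on R is proper. -/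
open Finset

/-!
Write `L k = D k + τ k` and construct `D k`, `τ k` by induction on `k`. Since `MN = NM = 0`,
the corner projections `x ↦ exe` and `x ↦ fxf` are ring homomorphisms. Projecting the Lie
identity to `fRf` shows that the `fRf`-part of `L n a`, for `a ∈ eRe`, commutes with `fRf`
once the lower levels are known; as `Z(fRf) = Z(R) f` it lifts to a central element, unique
by weak faithfulness, and these lifts together with their mirror images form `τ n`. Expanding
`L n [e, m]` for `m ∈ eRf ∪ fRe` shows, using 2-torsion freeness, that `L n` maps `eRf` and
`fRe` into themselves; with the choice of `τ n` this gives `D n = L n - τ n` the shape of a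
derivation of a generalized matrix algebra, which is what the next level needs.

For the Leibniz rule at level `n` consider its defect `Ω(x, y) = hdDefect D n x y`. The Lie
identity makes `Ω` symmetric, and the Leibniz rule at lower levels makes `Ω` a Hochschild
2-cocycle. Symmetry and the shape of the `D k` kill `Ω` on every pair of Peirce components
except `eRe × eRe` and `fRf × fRf`. For `a, a' ∈ eRe` the cocycle identity then shows that `Ω(a, a')` is annihilated
by `eRf`, `fRe` and `f` on both sides, so it vanishes by weak faithfulness.
-/

section Antidiagonal

variable {M : Type*} [AddCommMonoid M]

lemma sum_antidiagonal_eq_left {n : ℕ} (g : ℕ × ℕ → M)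
    (h : ∀ ij ∈ antidiagonal n, ij.1 < n → g ij = 0) :
    ∑ ij ∈ antidiagonal n, g ij = g (n, 0) :=
  sum_eq_single_of_mem (n, 0) (by simp) fun ij hij hne => h ij hij <| by
    rcases ij with ⟨i, j⟩
    rw [HasAntidiagonal.mem_antidiagonal] at hij
    simp only [ne_eq, Prod.mk.injEq, not_and] at hne ⊢
    omega

lemma sum_antidiagonal_eq_right {n : ℕ} (g : ℕ × ℕ → M)
    (h : ∀ ij ∈ antidiagonal n, ij.2 < n → g ij = 0) :
    ∑ ij ∈ antidiagonal n, g ij = g (0, n) := by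
  rw [← Nat.sum_antidiagonal_swap]
  exact sum_antidiagonal_eq_left _ fun ij hij hlt => h ij.swap (by simpa [add_comm] using hij) hlt

end Antidiagonal

section Defect

variable {R : Type*} [Ring R]

def hdDefect (D : ℕ → R → R) (n : ℕ) (x y : R) : R :=
  D n (x * y) - ∑ ij ∈ antidiagonal n, D ij.1 x * D ij.2 y

/-- Both sides are the degree-`n` coefficient of `S (x * y * z) - S x * S y * S z`, where `S`
is the generating series of `D`. -/
lemma hdDefect_cocycle (D : ℕ → R → R) (hD0 : ∀ x, D 0 x = x) {n : ℕ}
    (hlow : ∀ k < n, ∀ x y, hdDefect D k x y = 0) (x y z : R) :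
    hdDefect D n (x * y) z + hdDefect D n x y * z =
      hdDefect D n x (y * z) + x * hdDefect D n y z := by
  let S : R → PowerSeries R := fun x => PowerSeries.mk fun k => D k x
  let E : R → R → PowerSeries R := fun x y => S (x * y) - S x * S y
  have hE : ∀ k x y, PowerSeries.coeff k (E x y) = hdDefect D k x y := by
    intro k x y
    simp [E, S, hdDefect, PowerSeries.coeff_mul]
  have key : E (x * y) z + E x y * S z = E x (y * z) + S x * E y z := by
    simp only [E, mul_assoc, sub_mul, mul_sub]
    abel
  have hleft : PowerSeries.coeff n (E x y * S z) = hdDefect D n x y * z := by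
    rw [PowerSeries.coeff_mul, sum_antidiagonal_eq_left]
    · simp [hE, S, hD0]
    · intro ij _ hlt
      rw [hE, hlow _ hlt, zero_mul]
  have hright : PowerSeries.coeff n (S x * E y z) = x * hdDefect D n y z := by
    rw [PowerSeries.coeff_mul, sum_antidiagonal_eq_right]
    · simp [hE, S, hD0]
    · intro ij _ hlt
      rw [hE, hlow _ hlt, mul_zero]
  simpa only [map_add, hE, hleft, hright] using congrArg (PowerSeries.coeff n) key

end Defect

section Center

variable {R : Type*} [Ring R]

lemma commutator_eq_of_sub_mem_center {a a' b b' : R} (ha : a - a' ∈ Set.center R)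
    (hb : b - b' ∈ Set.center R) : a * b - b * a = a' * b' - b' * a' := by
  have hs := Semigroup.mem_center_iff.1 ha
  have ht := Semigroup.mem_center_iff.1 hb
  have key : a * b - b * a - (a' * b' - b' * a') =
      ((a - a') * b' - b' * (a - a')) + (a' * (b - b') - (b - b') * a') +
        ((a - a') * (b - b') - (b - b') * (a - a')) := by noncomm_ring
  rw [← sub_eq_zero, key, ← hs b', ht a', ← hs (b - b')]
  simp

lemma commute_map_of_mem_center {S : Type*} [Ring S] (π : R →ₙ+* S) {z : R}
    (hz : z ∈ Set.center R) (y : R) : Commute (π z) (π y) := by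
  rw [Commute, SemiconjBy, ← map_mul, ← map_mul, Semigroup.mem_center_iff.1 hz y]

open Classical in
noncomputable def centralLift (f b : R) : R :=
  if h : ∃ z ∈ Set.center R, z * f = b then h.choose else 0

lemma centralLift_mem_center (f b : R) : centralLift f b ∈ Set.center R := by
  unfold centralLift
  split_ifs with h
  · exact h.choose_spec.1
  · exact Set.zero_mem_center

lemma centralLift_mul {f b : R} (h : ∃ z ∈ Set.center R, z * f = b) :
    centralLift f b * f = b := by
  rw [centralLift, dif_pos h]
  exact h.choose_spec.2

lemma centralLift_eq {f z : R} (hf : ∀ c ∈ Set.center R, c * f = 0 → c = 0)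
    (hz : z ∈ Set.center R) : centralLift f (z * f) = z := by
  have h : ∃ c ∈ Set.center R, c * f = z * f := ⟨z, hz, rfl⟩
  refine sub_eq_zero.1 (hf _ ((Subring.center R).sub_mem (centralLift_mem_center f _) hz) ?_)
  rw [sub_mul, centralLift_mul h, sub_self]

end Center

section LieExpansion

variable {𝕜 R S : Type*} [CommRing 𝕜] [Ring R] [Algebra 𝕜 R] [Ring S] {L : ℕ → R →ₗ[𝕜] R}

lemma map_L_commutator (hL : IsLieHigherDerivation 𝕜 R L) (π : R →ₙ+* S) {n : ℕ} {u : R}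
    (hu : ∀ i < n, ∀ y, Commute (π (L i u)) (π y)) (y : R) :
    π (L n (u * y - y * u)) = π (L n u) * π y - π y * π (L n u) := by
  rw [hL.2, map_sum, sum_antidiagonal_eq_left]
  · simp [hL.1]
  · intro ij _ hlt
    rw [map_sub, map_mul, map_mul, (hu _ hlt _).eq, sub_self]

end LieExpansion

/-- `M = eRf` and `N = fRe` are the off-diagonal Peirce corners; `pA`, `pM`, `pN`, `pB` below
project onto `A = eRe`, `M`, `N`, `B = fRf`, and `swap` exchanges `e` and `f`. -/
structure TrivialPeirce (R : Type*) [Ring R] where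
  e : R
  f : R
  e_mul_e : e * e = e
  e_add_f : e + f = 1
  MN_eq_zero : ∀ x y : R, e * x * f * (f * y * e) = 0
  NM_eq_zero : ∀ x y : R, f * x * e * (e * y * f) = 0

namespace TrivialPeirce

section Decomposition

variable {R : Type*} [Ring R] (P : TrivialPeirce R)

lemma f_eq : P.f = 1 - P.e := eq_sub_of_add_eq' P.e_add_f

@[simp] lemma e_mul_f : P.e * P.f = 0 := by rw [f_eq, mul_sub, mul_one, P.e_mul_e, sub_self]

@[simp] lemma f_mul_e : P.f * P.e = 0 := by rw [f_eq, sub_mul, one_mul, P.e_mul_e, sub_self]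

@[simp] lemma f_mul_f : P.f * P.f = P.f := by
  calc P.f * P.f = P.f * (1 - P.e) := by rw [← f_eq]
    _ = P.f := by rw [mul_sub, mul_one, f_mul_e, sub_zero]

attribute [simp] e_mul_e

@[simp] lemma e_mul_e_mul (x : R) : P.e * (P.e * x) = P.e * x := by rw [← mul_assoc, P.e_mul_e]
@[simp] lemma f_mul_f_mul (x : R) : P.f * (P.f * x) = P.f * x := by rw [← mul_assoc, f_mul_f]
@[simp] lemma e_mul_f_mul (x : R) : P.e * (P.f * x) = 0 := by rw [← mul_assoc, e_mul_f, zero_mul]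
@[simp] lemma f_mul_e_mul (x : R) : P.f * (P.e * x) = 0 := by rw [← mul_assoc, f_mul_e, zero_mul]

def swap : TrivialPeirce R where
  e := P.f
  f := P.e
  e_mul_e := P.f_mul_f
  e_add_f := by rw [add_comm, P.e_add_f]
  MN_eq_zero := P.NM_eq_zero
  NM_eq_zero := P.MN_eq_zero

/-- Multiplicative because `MN = 0`. -/
def pA : R →ₙ+* R where
  toFun x := P.e * x * P.e
  map_mul' x y := by
    have h := P.MN_eq_zero x y
    calc P.e * (x * y) * P.e = P.e * x * (P.e + P.f) * y * P.e := by
          rw [P.e_add_f, mul_one]; simp only [mul_assoc]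
      _ = P.e * x * P.e * (P.e * y * P.e) + P.e * x * P.f * (P.f * y * P.e) := by
          simp only [mul_add, add_mul, mul_assoc, e_mul_e_mul, f_mul_f_mul]
      _ = P.e * x * P.e * (P.e * y * P.e) := by rw [h, add_zero]
  map_zero' := by simp
  map_add' x y := by simp [mul_add, add_mul]

def pM : R →+ R := (AddMonoidHom.mulRight P.f).comp (AddMonoidHom.mulLeft P.e)

def pB : R →ₙ+* R := P.swap.pA

def pN : R →+ R := P.swap.pM

lemma pA_apply (x : R) : P.pA x = P.e * x * P.e := rfl
lemma pM_apply (x : R) : P.pM x = P.e * x * P.f := rfl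
lemma pB_apply (x : R) : P.pB x = P.f * x * P.f := rfl
lemma pN_apply (x : R) : P.pN x = P.f * x * P.e := rfl

lemma pA_add_pM_add_pN_add_pB (x : R) : P.pA x + P.pM x + P.pN x + P.pB x = x := by
  have h : x = (P.e + P.f) * x * (P.e + P.f) := by rw [P.e_add_f, one_mul, mul_one]
  conv_rhs => rw [h]
  simp only [pA_apply, pM_apply, pN_apply, pB_apply, mul_add, add_mul]
  abel

lemma eq_iff_projections_eq {x y : R} : x = y ↔
    P.pA x = P.pA y ∧ P.pM x = P.pM y ∧ P.pN x = P.pN y ∧ P.pB x = P.pB y := by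
  refine ⟨fun h => h ▸ ⟨rfl, rfl, rfl, rfl⟩, fun ⟨hA, hM, hN, hB⟩ => ?_⟩
  rw [← P.pA_add_pM_add_pN_add_pB x, ← P.pA_add_pM_add_pN_add_pB y, hA, hM, hN, hB]

section Projections

variable (x : R)

@[simp] lemma pA_pA : P.pA (P.pA x) = P.pA x := by simp [pA_apply, mul_assoc]
@[simp] lemma pA_pM : P.pA (P.pM x) = 0 := by simp [pA_apply, pM_apply, mul_assoc]
@[simp] lemma pA_pN : P.pA (P.pN x) = 0 := by simp [pA_apply, pN_apply, mul_assoc]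
@[simp] lemma pA_pB : P.pA (P.pB x) = 0 := by simp [pA_apply, pB_apply, mul_assoc]
@[simp] lemma pM_pA : P.pM (P.pA x) = 0 := by simp [pA_apply, pM_apply, mul_assoc]
@[simp] lemma pM_pM : P.pM (P.pM x) = P.pM x := by simp [pM_apply, mul_assoc]
@[simp] lemma pM_pN : P.pM (P.pN x) = 0 := by simp [pM_apply, pN_apply, mul_assoc]
@[simp] lemma pM_pB : P.pM (P.pB x) = 0 := by simp [pM_apply, pB_apply, mul_assoc]
@[simp] lemma pB_pB : P.pB (P.pB x) = P.pB x := P.swap.pA_pA x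
@[simp] lemma pB_pN : P.pB (P.pN x) = 0 := P.swap.pA_pM x
@[simp] lemma pB_pM : P.pB (P.pM x) = 0 := P.swap.pA_pN x
@[simp] lemma pB_pA : P.pB (P.pA x) = 0 := P.swap.pA_pB x
@[simp] lemma pN_pB : P.pN (P.pB x) = 0 := P.swap.pM_pA x
@[simp] lemma pN_pN : P.pN (P.pN x) = P.pN x := P.swap.pM_pM x
@[simp] lemma pN_pM : P.pN (P.pM x) = 0 := P.swap.pM_pN x
@[simp] lemma pN_pA : P.pN (P.pA x) = 0 := P.swap.pM_pB x

@[simp] lemma pA_e : P.pA P.e = P.e := by simp [pA_apply]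
@[simp] lemma pB_e : P.pB P.e = 0 := by simp [pB_apply]

lemma pA_e_mul : P.pA (P.e * x) = P.pA x := by simp [pA_apply, mul_assoc]
lemma pA_mul_e : P.pA (x * P.e) = P.pA x := by simp [pA_apply, mul_assoc]
lemma pB_e_mul : P.pB (P.e * x) = 0 := by simp [pB_apply]
lemma pB_mul_e : P.pB (x * P.e) = 0 := by simp [pB_apply, mul_assoc]
lemma pM_e_mul : P.pM (P.e * x) = P.pM x := by simp [pM_apply, mul_assoc]
lemma pM_mul_e : P.pM (x * P.e) = 0 := by simp [pM_apply, mul_assoc]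
lemma pN_e_mul : P.pN (P.e * x) = 0 := by simp [pN_apply]
lemma pN_mul_e : P.pN (x * P.e) = P.pN x := by simp [pN_apply, mul_assoc]

end Projections

def OffDiag (x : R) : Prop := P.pA x = 0 ∧ P.pB x = 0

section Products

variable (x y : R)

lemma pM_mul : P.pM (x * y) = P.pA x * P.pM y + P.pM x * P.pB y := by
  have h : x * y = x * (P.e + P.f) * y := by rw [P.e_add_f, mul_one]
  rw [h]
  simp only [pA_apply, pM_apply, pB_apply, mul_add, add_mul, mul_assoc, e_mul_e_mul, f_mul_f_mul]

lemma pN_mul : P.pN (x * y) = P.pN x * P.pA y + P.pB x * P.pN y := by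
  rw [add_comm]; exact P.swap.pM_mul x y

lemma pM_mul_eq_mul_pB : P.pM x * y = P.pM x * P.pB y := by
  have h := P.MN_eq_zero x y
  simp only [pM_apply, pB_apply]
  calc P.e * x * P.f * y = P.e * x * P.f * (P.f * y * (P.e + P.f)) := by
        rw [P.e_add_f, mul_one]; simp only [mul_assoc, f_mul_f_mul]
    _ = P.e * x * P.f * (P.f * y * P.f) := by rw [mul_add, mul_add, h, zero_add]

lemma mul_pM_eq_pA_mul : y * P.pM x = P.pA y * P.pM x := by
  have h := P.NM_eq_zero y x
  simp only [pM_apply, pA_apply]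
  calc y * (P.e * x * P.f) = (P.e + P.f) * y * P.e * (P.e * x * P.f) := by
        rw [P.e_add_f, one_mul]; simp only [mul_assoc, e_mul_e_mul]
    _ = P.e * y * P.e * (P.e * x * P.f) := by rw [add_mul, add_mul, add_mul, h, add_zero]

lemma pN_mul_eq_mul_pA : P.pN x * y = P.pN x * P.pA y := P.swap.pM_mul_eq_mul_pB x y

lemma mul_pN_eq_pB_mul : y * P.pN x = P.pB y * P.pN x := P.swap.mul_pM_eq_pA_mul x y

lemma pA_mul_pB : P.pA x * P.pB y = 0 := by simp [pA_apply, pB_apply, mul_assoc]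
lemma pB_mul_pA : P.pB x * P.pA y = 0 := P.swap.pA_mul_pB x y

lemma mul_eq_zero_of_offDiag {x y : R} (hx : P.OffDiag x) (hy : P.OffDiag y) : x * y = 0 := by
  rw [← P.pA_add_pM_add_pN_add_pB x, hx.1, hx.2, zero_add, add_zero, add_mul, pM_mul_eq_mul_pB,
    pN_mul_eq_mul_pA, hy.1, hy.2, mul_zero, mul_zero, add_zero]

end Products

lemma commute_e_pA (x : R) : Commute P.e (P.pA x) := by
  simp [Commute, SemiconjBy, pA_apply, mul_assoc]

lemma commute_e_pB (x : R) : Commute P.e (P.pB x) := by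
  simp [Commute, SemiconjBy, pB_apply, mul_assoc]

lemma pA_mul_f (x : R) : P.pA x * P.f = 0 := by simp [pA_apply, mul_assoc]

lemma f_mul_pA (x : R) : P.f * P.pA x = 0 := by simp [pA_apply, ← mul_assoc]

lemma pB_mul_f (x : R) : P.pB x * P.f = P.pB x := by simp [pB_apply, mul_assoc]

lemma pA_smul {𝕜 : Type*} [CommRing 𝕜] [Algebra 𝕜 R] (c : 𝕜) (x : R) :
    P.pA (c • x) = c • P.pA x := by
  simp [pA_apply]

lemma pB_smul {𝕜 : Type*} [CommRing 𝕜] [Algebra 𝕜 R] (c : 𝕜) (x : R) :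
    P.pB (c • x) = c • P.pB x :=
  P.swap.pA_smul c x

lemma pA_of_mem_center {z : R} (hz : z ∈ Set.center R) : P.pA z = z * P.e := by
  rw [pA_apply, Semigroup.mem_center_iff.1 hz, mul_assoc, P.e_mul_e]

lemma pB_of_mem_center {z : R} (hz : z ∈ Set.center R) : P.pB z = z * P.f :=
  P.swap.pA_of_mem_center hz

lemma pA_add_pB_mem_center {a b : R} (hA : ∀ x, Commute (P.pA a) (P.pA x))
    (hB : ∀ x, Commute (P.pB b) (P.pB x)) (hM : ∀ x, P.pA a * P.pM x = P.pM x * P.pB b)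
    (hN : ∀ x, P.pB b * P.pN x = P.pN x * P.pA a) : P.pA a + P.pB b ∈ Set.center R := by
  refine Semigroup.mem_center_iff.2 fun x => P.eq_iff_projections_eq.2 ⟨?_, ?_, ?_, ?_⟩
  · simp [(hA x).eq]
  · simp [pM_mul, hM x]
  · simp [pN_mul, hN x]
  · simp [(hB x).eq]

/-- Weak faithfulness on the side of `eRe`; `P.swap.FaithfulCorner` is the side of `fRf`. -/
def FaithfulCorner : Prop :=
  ∀ x, (∀ y, P.pA x * P.pM y = 0) → (∀ y, P.pN y * P.pA x = 0) → P.pA x = 0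

/-- `Z(eRe) ⊆ Z(R) e`; `P.swap.CornerCenterLifts` is the statement for `fRf`. -/
def CornerCenterLifts : Prop :=
  ∀ x, (∀ y, Commute (P.pA x) (P.pA y)) → ∃ z ∈ Set.center R, z * P.e = P.pA x

lemma eq_zero_of_mem_center_of_mul_f (hP : P.FaithfulCorner) {z : R} (hz : z ∈ Set.center R)
    (hzf : z * P.f = 0) : z = 0 := by
  have hc := Semigroup.mem_center_iff.1 hz
  have hze : z * P.e = 0 := by
    rw [← P.pA_of_mem_center hz]
    refine hP z (fun y => ?_) (fun y => ?_)
    · calc P.pA z * P.pM y = P.e * y * P.f * z := by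
            rw [P.pA_of_mem_center hz, pM_apply, hc]; simp [mul_assoc]
        _ = 0 := by rw [mul_assoc, hc P.f, hzf, mul_zero]
    · calc P.pN y * P.pA z = z * P.f * (y * P.e) := by
            rw [P.pA_of_mem_center hz, pN_apply, ← mul_assoc, hc]; simp [mul_assoc]
        _ = 0 := by rw [hzf, zero_mul]
  rw [← mul_one z, ← P.e_add_f, mul_add, hze, hzf, add_zero]

lemma faithfulCorner_of (h : ∀ a ∈ corner P.e P.e, (∀ m ∈ corner P.e P.f, a * m = 0) →
    (∀ n ∈ corner P.f P.e, n * a = 0) → a = 0) : P.FaithfulCorner :=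
  fun x h₁ h₂ => h _ ⟨x, rfl⟩ (by rintro _ ⟨y, rfl⟩; exact h₁ y) (by rintro _ ⟨y, rfl⟩; exact h₂ y)

lemma cornerCenterLifts_of (h : cornerCenter P.e ⊆ (fun z => z * P.e) '' Set.center R) :
    P.CornerCenterLifts :=
  fun x hx => h ⟨⟨x, rfl⟩, by rintro _ ⟨y, rfl⟩; exact (hx y).eq⟩

structure Adapted (d : R → R) : Prop where
  pB_map_pA : ∀ x, P.pB (d (P.pA x)) = 0
  pA_map_pB : ∀ x, P.pA (d (P.pB x)) = 0
  map_pM : ∀ x, P.pM (d (P.pM x)) = d (P.pM x)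
  map_pN : ∀ x, P.pN (d (P.pN x)) = d (P.pN x)

variable {P}

lemma Adapted.swap {d : R → R} (h : P.Adapted d) : P.swap.Adapted d :=
  ⟨h.pA_map_pB, h.pB_map_pA, h.map_pN, h.map_pM⟩

lemma Adapted.pA_map_pM {d : R → R} (h : P.Adapted d) (x : R) : P.pA (d (P.pM x)) = 0 := by
  rw [← h.map_pM, pA_pM]

lemma Adapted.pB_map_pM {d : R → R} (h : P.Adapted d) (x : R) : P.pB (d (P.pM x)) = 0 := by
  rw [← h.map_pM, pB_pM]

lemma Adapted.pA_map_pN {d : R → R} (h : P.Adapted d) (x : R) : P.pA (d (P.pN x)) = 0 :=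
  h.swap.pB_map_pM x

lemma Adapted.pB_map_pN {d : R → R} (h : P.Adapted d) (x : R) : P.pB (d (P.pN x)) = 0 :=
  h.swap.pA_map_pM x

variable {𝕜 : Type*} [CommRing 𝕜] [Algebra 𝕜 R]

variable (P) in
structure IsAdaptedPart (L : ℕ → R →ₗ[𝕜] R) (D : ℕ → R → R) (k : ℕ) : Prop where
  sub_mem_center : ∀ x, L k x - D k x ∈ Set.center R
  adapted : P.Adapted (D k)

lemma IsAdaptedPart.swap {L : ℕ → R →ₗ[𝕜] R} {D : ℕ → R → R} {k : ℕ}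
    (h : P.IsAdaptedPart L D k) : P.swap.IsAdaptedPart L D k :=
  ⟨h.sub_mem_center, h.adapted.swap⟩

end Decomposition

section LieIdentity

variable {𝕜 R : Type*} [CommRing 𝕜] [Ring R] [Algebra 𝕜 R] {P : TrivialPeirce R}
  {L : ℕ → R →ₗ[𝕜] R} {D : ℕ → R → R} {n : ℕ}

lemma IsAdaptedPart.commute_pB_L_pA {k : ℕ} (h : P.IsAdaptedPart L D k) (x y : R) :
    Commute (P.pB (L k (P.pA x))) (P.pB y) := by
  have := commute_map_of_mem_center P.pB (h.sub_mem_center (P.pA x)) y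
  rwa [map_sub, h.adapted.pB_map_pA, sub_zero] at this

lemma commute_pB_L_pA (hL : IsLieHigherDerivation 𝕜 R L)
    (hlow : ∀ k < n, P.IsAdaptedPart L D k) (x y : R) :
    Commute (P.pB (L n (P.pA x))) (P.pB y) := by
  have h := map_L_commutator hL P.pB (fun i hi => (hlow i hi).commute_pB_L_pA x) (P.pB y)
  rw [P.pA_mul_pB, P.pB_mul_pA, sub_self, map_zero, map_zero, pB_pB, eq_comm, sub_eq_zero] at h
  exact h

lemma pB_L_commutator_pA (hL : IsLieHigherDerivation 𝕜 R L)
    (hlow : ∀ k < n, P.IsAdaptedPart L D k) (x y : R) :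
    P.pB (L n (P.pA x * P.pA y - P.pA y * P.pA x)) = 0 := by
  rw [map_L_commutator hL P.pB (fun i hi => (hlow i hi).commute_pB_L_pA x), pB_pA, mul_zero,
    zero_mul, sub_zero]

lemma commute_pA_L_e (hL : IsLieHigherDerivation 𝕜 R L) (hlow : ∀ k < n, P.IsAdaptedPart L D k)
    (he : ∀ k, 0 < k → k < n → P.OffDiag (D k P.e)) (y : R) :
    Commute (P.pA (L n P.e)) (P.pA y) := by
  have hu : ∀ i < n, ∀ y, Commute (P.pA (L i P.e)) (P.pA y) := by
    intro i hi y
    rcases Nat.eq_zero_or_pos i with rfl | hpos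
    · simpa [hL.1] using P.commute_e_pA y
    · have := commute_map_of_mem_center P.pA ((hlow i hi).sub_mem_center P.e) y
      rwa [map_sub, (he i hpos hi).1, sub_zero] at this
  have h := map_L_commutator hL P.pA hu (P.pA y)
  rw [(P.commute_e_pA y).eq, sub_self, map_zero, map_zero, pA_pA, eq_comm, sub_eq_zero] at h
  exact h

lemma commute_pB_L_e (hL : IsLieHigherDerivation 𝕜 R L) (hlow : ∀ k < n, P.IsAdaptedPart L D k)
    (he : ∀ k, 0 < k → k < n → P.OffDiag (D k P.e)) (y : R) :
    Commute (P.pB (L n P.e)) (P.pB y) := by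
  have hu : ∀ i < n, ∀ y, Commute (P.pB (L i P.e)) (P.pB y) := by
    intro i hi y
    rcases Nat.eq_zero_or_pos i with rfl | hpos
    · simp [hL.1]
    · have := commute_map_of_mem_center P.pB ((hlow i hi).sub_mem_center P.e) y
      rwa [map_sub, (he i hpos hi).2, sub_zero] at this
  have h := map_L_commutator hL P.pB hu (P.pB y)
  rw [(P.commute_e_pB y).eq, sub_self, map_zero, map_zero, pB_pB, eq_comm, sub_eq_zero] at h
  exact h

lemma L_e_commutator (hL : IsLieHigherDerivation 𝕜 R L) (hn : 0 < n)
    (hlow : ∀ k < n, P.IsAdaptedPart L D k)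
    (he : ∀ k, 0 < k → k < n → P.OffDiag (D k P.e)) {u : R}
    (hu : ∀ j < n, P.OffDiag (D j u)) :
    L n (P.e * u - u * P.e) =
      P.e * L n u - L n u * P.e + (L n P.e * u - u * L n P.e) := by
  rw [hL.2, sum_eq_add_of_mem (0, n) (n, 0) (by simp) (by simp) (by simp; omega)]
  · simp [hL.1]
  · -- the inner terms are commutators of off-diagonal elements, which multiply to zero
    rintro ⟨i, j⟩ hij ⟨h0, hn0⟩
    rw [HasAntidiagonal.mem_antidiagonal] at hij
    simp only [ne_eq, Prod.mk.injEq] at h0 hn0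
    have hi : 0 < i := by omega
    have hj : 0 < j := by omega
    dsimp only
    rw [commutator_eq_of_sub_mem_center ((hlow i (by omega)).sub_mem_center _)
      ((hlow j (by omega)).sub_mem_center _),
      P.mul_eq_zero_of_offDiag (he i hi (by omega)) (hu j (by omega)),
      P.mul_eq_zero_of_offDiag (hu j (by omega)) (he i hi (by omega)), sub_self]

lemma L_pM_spec (htf : ∀ x : R, x + x = 0 → x = 0) (hL : IsLieHigherDerivation 𝕜 R L)
    (hn : 0 < n) (hlow : ∀ k < n, P.IsAdaptedPart L D k)
    (he : ∀ k, 0 < k → k < n → P.OffDiag (D k P.e)) (x : R) :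
    P.pM (L n (P.pM x)) = L n (P.pM x) ∧
      P.pA (L n P.e) * P.pM x = P.pM x * P.pB (L n P.e) := by
  have h := L_e_commutator hL hn hlow he (u := P.pM x)
    fun j hj => ⟨(hlow j hj).adapted.pA_map_pM x, (hlow j hj).adapted.pB_map_pM x⟩
  have hm : P.e * P.pM x - P.pM x * P.e = P.pM x := by simp [pM_apply, mul_assoc]
  rw [hm] at h
  -- project `L n m = [e, L n m] + [L n e, m]` onto the four corners
  have hA := congrArg P.pA h
  have hB := congrArg P.pB h
  have hM := congrArg P.pM h
  have hN := congrArg P.pN h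
  simp only [map_add, map_sub, pA_e_mul, pA_mul_e, pB_e_mul, pB_mul_e, pM_e_mul, pM_mul_e,
    pN_e_mul, pN_mul_e] at hA hB hM hN
  simp [pM_mul, pN_mul] at hA hB hM hN
  refine ⟨?_, sub_eq_zero.1 hM⟩
  conv_rhs => rw [← P.pA_add_pM_add_pN_add_pB (L n (P.pM x))]
  rw [hA, hB, htf _ (eq_neg_iff_add_eq_zero.1 hN), zero_add, add_zero, add_zero]

lemma L_pN_spec (htf : ∀ x : R, x + x = 0 → x = 0) (hL : IsLieHigherDerivation 𝕜 R L)
    (hn : 0 < n) (hlow : ∀ k < n, P.IsAdaptedPart L D k)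
    (he : ∀ k, 0 < k → k < n → P.OffDiag (D k P.e)) (x : R) :
    P.pN (L n (P.pN x)) = L n (P.pN x) ∧
      P.pB (L n P.e) * P.pN x = P.pN x * P.pA (L n P.e) := by
  have h := L_e_commutator hL hn hlow he (u := P.pN x)
    fun j hj => ⟨(hlow j hj).adapted.pA_map_pN x, (hlow j hj).adapted.pB_map_pN x⟩
  have hm : P.e * P.pN x - P.pN x * P.e = -P.pN x := by simp [pN_apply, mul_assoc]
  rw [hm, map_neg, neg_eq_iff_eq_neg] at h
  have hA := congrArg P.pA h
  have hB := congrArg P.pB h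
  have hM := congrArg P.pM h
  have hN := congrArg P.pN h
  simp only [map_neg, map_add, map_sub, pA_e_mul, pA_mul_e, pB_e_mul, pB_mul_e, pM_e_mul,
    pM_mul_e, pN_e_mul, pN_mul_e] at hA hB hM hN
  simp [pM_mul, pN_mul] at hA hB hM hN
  refine ⟨?_, (sub_eq_zero.1 hN).symm⟩
  conv_rhs => rw [← P.pA_add_pM_add_pN_add_pB (L n (P.pN x))]
  rw [hA, hB, htf _ (eq_neg_iff_add_eq_zero.1 hM), zero_add, zero_add, add_zero]

lemma pA_add_pB_L_e_mem_center (htf : ∀ x : R, x + x = 0 → x = 0)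
    (hL : IsLieHigherDerivation 𝕜 R L) (hn : 0 < n) (hlow : ∀ k < n, P.IsAdaptedPart L D k)
    (he : ∀ k, 0 < k → k < n → P.OffDiag (D k P.e)) :
    P.pA (L n P.e) + P.pB (L n P.e) ∈ Set.center R :=
  P.pA_add_pB_mem_center (commute_pA_L_e hL hlow he) (commute_pB_L_e hL hlow he)
    (fun x => (L_pM_spec htf hL hn hlow he x).2) (fun x => (L_pN_spec htf hL hn hlow he x).2)

end LieIdentity

section CentralPart

variable {𝕜 R : Type*} [CommRing 𝕜] [Ring R] [Algebra 𝕜 R] (P : TrivialPeirce R)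
  (L : ℕ → R →ₗ[𝕜] R)

noncomputable def halfTau (n : ℕ) (x : R) : R :=
  centralLift P.f (P.pB (L n (P.pA x)))

noncomputable def tau (n : ℕ) (x : R) : R :=
  P.halfTau L n x + P.swap.halfTau L n x

noncomputable def der (n : ℕ) (x : R) : R :=
  L n x - P.tau L n x

lemma tau_swap : P.swap.tau L = P.tau L := by
  funext n x
  exact add_comm _ _

lemma der_swap : P.swap.der L = P.der L := by
  funext n x
  rw [der, der, tau_swap]

lemma halfTau_mem_center (n : ℕ) (x : R) : P.halfTau L n x ∈ Set.center R :=
  centralLift_mem_center _ _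

lemma tau_mem_center (n : ℕ) (x : R) : P.tau L n x ∈ Set.center R :=
  Set.add_mem_center (P.halfTau_mem_center L n x) (P.swap.halfTau_mem_center L n x)

lemma sub_der_mem_center (n : ℕ) (x : R) : L n x - P.der L n x ∈ Set.center R := by
  rw [der, sub_sub_cancel]
  exact P.tau_mem_center L n x

variable {P L} {D : ℕ → R → R} {n : ℕ}

lemma halfTau_eq (hA : P.FaithfulCorner) {x z : R} (hz : z ∈ Set.center R)
    (h : z * P.f = P.pB (L n (P.pA x))) : P.halfTau L n x = z := by
  rw [halfTau, ← h, centralLift_eq (fun c hc => P.eq_zero_of_mem_center_of_mul_f hA hc) hz]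

lemma halfTau_of_pA_eq_zero (hA : P.FaithfulCorner) {x : R} (hx : P.pA x = 0) :
    P.halfTau L n x = 0 :=
  halfTau_eq hA Set.zero_mem_center (by simp [hx])

lemma halfTau_mul_f (hZ : P.swap.CornerCenterLifts) (hL : IsLieHigherDerivation 𝕜 R L)
    (hlow : ∀ k < n, P.IsAdaptedPart L D k) (x : R) :
    P.halfTau L n x * P.f = P.pB (L n (P.pA x)) :=
  centralLift_mul (hZ _ (commute_pB_L_pA hL hlow x))

lemma isLinearMap_halfTau (hA : P.FaithfulCorner) (hZ : P.swap.CornerCenterLifts)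
    (hL : IsLieHigherDerivation 𝕜 R L) (hlow : ∀ k < n, P.IsAdaptedPart L D k) :
    IsLinearMap 𝕜 (P.halfTau L n) where
  map_add x y := halfTau_eq hA
    (Set.add_mem_center (P.halfTau_mem_center L n x) (P.halfTau_mem_center L n y)) <| by
      rw [add_mul, halfTau_mul_f hZ hL hlow, halfTau_mul_f hZ hL hlow, map_add, map_add, map_add]
  map_smul c x := halfTau_eq hA (Set.smul_mem_center c (P.halfTau_mem_center L n x)) <| by
      rw [smul_mul_assoc, halfTau_mul_f hZ hL hlow, pA_smul, map_smul, pB_smul]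

lemma halfTau_commutator (hA : P.FaithfulCorner) (hL : IsLieHigherDerivation 𝕜 R L)
    (hlow : ∀ k < n, P.IsAdaptedPart L D k) (x y : R) :
    P.halfTau L n (x * y - y * x) = 0 :=
  halfTau_eq hA Set.zero_mem_center <| by
    rw [zero_mul, map_sub, map_mul, map_mul, pB_L_commutator_pA hL hlow]

lemma isLinearMap_tau (hA : P.FaithfulCorner) (hB : P.swap.FaithfulCorner)
    (hZA : P.CornerCenterLifts) (hZB : P.swap.CornerCenterLifts)
    (hL : IsLieHigherDerivation 𝕜 R L) (hlow : ∀ k < n, P.IsAdaptedPart L D k) :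
    IsLinearMap 𝕜 (P.tau L n) :=
  (IsLinearMap.mk' _ (isLinearMap_halfTau hA hZB hL hlow) +
    IsLinearMap.mk' _ (isLinearMap_halfTau (P := P.swap) hB hZA hL fun k hk =>
      (hlow k hk).swap)).isLinear

lemma tau_commutator (hA : P.FaithfulCorner) (hB : P.swap.FaithfulCorner)
    (hL : IsLieHigherDerivation 𝕜 R L) (hlow : ∀ k < n, P.IsAdaptedPart L D k) (x y : R) :
    P.tau L n (x * y - y * x) = 0 := by
  rw [tau, halfTau_commutator hA hL hlow,
    halfTau_commutator (P := P.swap) hB hL fun k hk => (hlow k hk).swap, add_zero]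

lemma tau_of_offDiag (hA : P.FaithfulCorner) (hB : P.swap.FaithfulCorner) {x : R}
    (hx : P.OffDiag x) : P.tau L n x = 0 := by
  rw [tau, halfTau_of_pA_eq_zero hA hx.1, halfTau_of_pA_eq_zero (P := P.swap) hB hx.2, add_zero]

lemma pB_der_pA (hB : P.swap.FaithfulCorner) (hZB : P.swap.CornerCenterLifts)
    (hL : IsLieHigherDerivation 𝕜 R L) (hlow : ∀ k < n, P.IsAdaptedPart L D k) (x : R) :
    P.pB (P.der L n (P.pA x)) = 0 := by
  rw [der, tau, halfTau_of_pA_eq_zero (P := P.swap) hB (P.pB_pA x), add_zero, map_sub,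
    P.pB_of_mem_center (P.halfTau_mem_center L n _), halfTau_mul_f hZB hL hlow, pA_pA, sub_self]

lemma tau_e (htf : ∀ x : R, x + x = 0 → x = 0) (hA : P.FaithfulCorner)
    (hB : P.swap.FaithfulCorner) (hL : IsLieHigherDerivation 𝕜 R L) (hn : 0 < n)
    (hlow : ∀ k < n, P.IsAdaptedPart L D k)
    (he : ∀ k, 0 < k → k < n → P.OffDiag (D k P.e)) :
    P.tau L n P.e = P.pA (L n P.e) + P.pB (L n P.e) := by
  rw [tau, halfTau_of_pA_eq_zero (P := P.swap) hB (P.pB_e), add_zero]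
  refine halfTau_eq hA (pA_add_pB_L_e_mem_center htf hL hn hlow he) ?_
  rw [add_mul, pA_mul_f, pB_mul_f, pA_e, zero_add]

lemma adapted_der (htf : ∀ x : R, x + x = 0 → x = 0) (hA : P.FaithfulCorner)
    (hB : P.swap.FaithfulCorner) (hZA : P.CornerCenterLifts) (hZB : P.swap.CornerCenterLifts)
    (hL : IsLieHigherDerivation 𝕜 R L) (hn : 0 < n) (hlow : ∀ k < n, P.IsAdaptedPart L D k)
    (he : ∀ k, 0 < k → k < n → P.OffDiag (D k P.e)) :
    P.Adapted (P.der L n) where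
  pB_map_pA := pB_der_pA hB hZB hL hlow
  pA_map_pB x := by
    have h := pB_der_pA (P := P.swap) hA hZA hL (fun k hk => (hlow k hk).swap) x
    rwa [der_swap] at h
  map_pM x := by
    rw [der, tau_of_offDiag hA hB ⟨P.pA_pM x, P.pB_pM x⟩, sub_zero]
    exact (L_pM_spec htf hL hn hlow he x).1
  map_pN x := by
    rw [der, tau_of_offDiag hA hB ⟨P.pA_pN x, P.pB_pN x⟩, sub_zero]
    exact (L_pN_spec htf hL hn hlow he x).1

lemma der_e (htf : ∀ x : R, x + x = 0 → x = 0) (hA : P.FaithfulCorner)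
    (hB : P.swap.FaithfulCorner) (hL : IsLieHigherDerivation 𝕜 R L) (hn : 0 < n)
    (hlow : ∀ k < n, P.IsAdaptedPart L D k)
    (he : ∀ k, 0 < k → k < n → P.OffDiag (D k P.e)) :
    P.OffDiag (P.der L n P.e) := by
  rw [OffDiag, der, tau_e htf hA hB hL hn hlow he]
  simp

end CentralPart

section LeibnizRule

variable {𝕜 R : Type*} [CommRing 𝕜] [Ring R] [Algebra 𝕜 R] {P : TrivialPeirce R}
  {L : ℕ → R →ₗ[𝕜] R} {D : ℕ → R → R} {n : ℕ}

variable (P L D n) in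
structure LeibnizStep : Prop where
  zero_apply : ∀ x, D 0 x = x
  hdDefect_lt : ∀ k < n, ∀ x y, hdDefect D k x y = 0
  part : ∀ k ≤ n, P.IsAdaptedPart L D k
  map_add : ∀ k ≤ n, ∀ x y, D k (x + y) = D k x + D k y
  map_commutator : ∀ x y, D n (x * y - y * x) = L n (x * y - y * x)

lemma sum_mem_pM {u v : R} (hu : ∀ i ≤ n, P.pB (D i u) = 0)
    (hv : ∀ j ≤ n, P.pA (D j v) = 0) :
    P.pA (∑ ij ∈ antidiagonal n, D ij.1 u * D ij.2 v) = 0 ∧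
      P.pB (∑ ij ∈ antidiagonal n, D ij.1 u * D ij.2 v) = 0 ∧
      P.pN (∑ ij ∈ antidiagonal n, D ij.1 u * D ij.2 v) = 0 := by
  have hi := fun ij (hij : ij ∈ antidiagonal n) => hu _ (HasAntidiagonal.antidiagonal.fst_le hij)
  have hj := fun ij (hij : ij ∈ antidiagonal n) => hv _ (HasAntidiagonal.antidiagonal.snd_le hij)
  refine ⟨?_, ?_, ?_⟩ <;> rw [map_sum] <;> refine sum_eq_zero fun ij hij => ?_
  · rw [map_mul, hj ij hij, mul_zero]
  · rw [map_mul, hi ij hij, zero_mul]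
  · rw [pN_mul, hi ij hij, hj ij hij, mul_zero, zero_mul, add_zero]

namespace LeibnizStep

lemma swap (H : P.LeibnizStep L D n) : P.swap.LeibnizStep L D n :=
  ⟨H.zero_apply, H.hdDefect_lt, fun k hk => (H.part k hk).swap, H.map_add, H.map_commutator⟩

lemma apply_zero (H : P.LeibnizStep L D n) {k : ℕ} (hk : k ≤ n) : D k 0 = 0 := by
  simpa using H.map_add k hk 0 0

lemma hdDefect_add_left (H : P.LeibnizStep L D n) (x x' y : R) :
    hdDefect D n (x + x') y = hdDefect D n x y + hdDefect D n x' y := by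
  have hsum : ∑ ij ∈ antidiagonal n, D ij.1 (x + x') * D ij.2 y =
      ∑ ij ∈ antidiagonal n, D ij.1 x * D ij.2 y + ∑ ij ∈ antidiagonal n, D ij.1 x' * D ij.2 y := by
    rw [← sum_add_distrib]
    refine sum_congr rfl fun ij hij => ?_
    rw [H.map_add _ (HasAntidiagonal.antidiagonal.fst_le hij), add_mul]
  rw [hdDefect, add_mul, H.map_add n le_rfl, hsum, hdDefect, hdDefect]
  abel

lemma hdDefect_add_right (H : P.LeibnizStep L D n) (x y y' : R) :
    hdDefect D n x (y + y') = hdDefect D n x y + hdDefect D n x y' := by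
  have hsum : ∑ ij ∈ antidiagonal n, D ij.1 x * D ij.2 (y + y') =
      ∑ ij ∈ antidiagonal n, D ij.1 x * D ij.2 y + ∑ ij ∈ antidiagonal n, D ij.1 x * D ij.2 y' := by
    rw [← sum_add_distrib]
    refine sum_congr rfl fun ij hij => ?_
    rw [H.map_add _ (HasAntidiagonal.antidiagonal.snd_le hij), mul_add]
  rw [hdDefect, mul_add, H.map_add n le_rfl, hsum, hdDefect, hdDefect]
  abel

lemma hdDefect_zero_left (H : P.LeibnizStep L D n) (y : R) : hdDefect D n 0 y = 0 := by
  simpa using H.hdDefect_add_left 0 0 y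

lemma hdDefect_zero_right (H : P.LeibnizStep L D n) (x : R) : hdDefect D n x 0 = 0 := by
  simpa using H.hdDefect_add_right x 0 0

/-- The defect is symmetric because `D n` agrees with `L n` on commutators and the lower
`D k` differ from `L k` by central maps. -/
lemma hdDefect_comm (hL : IsLieHigherDerivation 𝕜 R L) (H : P.LeibnizStep L D n) (x y : R) :
    hdDefect D n x y = hdDefect D n y x := by
  have hsub : D n (x * y) - D n (y * x) = D n (x * y - y * x) := by
    rw [sub_eq_iff_eq_add, ← H.map_add n le_rfl, sub_add_cancel]
  have hlie : L n (x * y - y * x) = ∑ ij ∈ antidiagonal n, D ij.1 x * D ij.2 y -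
      ∑ ij ∈ antidiagonal n, D ij.1 y * D ij.2 x := by
    rw [hL.2, ← Nat.sum_antidiagonal_swap (f := fun ij => D ij.1 y * D ij.2 x),
      ← sum_sub_distrib]
    refine sum_congr rfl fun ij hij => ?_
    exact commutator_eq_of_sub_mem_center
      ((H.part _ (HasAntidiagonal.antidiagonal.fst_le hij)).sub_mem_center x)
      ((H.part _ (HasAntidiagonal.antidiagonal.snd_le hij)).sub_mem_center y)
  rw [← sub_eq_zero, hdDefect, hdDefect, sub_sub_sub_comm, hsub, H.map_commutator, hlie, sub_self]

lemma hdDefect_eq_zero_of_mul_eq_zero (H : P.LeibnizStep L D n) {u v : R} (huv : u * v = 0)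
    (h : ∀ i ≤ n, ∀ j ≤ n, D i u * D j v = 0) : hdDefect D n u v = 0 := by
  rw [hdDefect, huv, H.apply_zero le_rfl, sum_eq_zero, sub_zero]
  exact fun ij hij => h _ (HasAntidiagonal.antidiagonal.fst_le hij) _
    (HasAntidiagonal.antidiagonal.snd_le hij)

lemma hdDefect_pM_left (H : P.LeibnizStep L D n) {v : R} (hv : ∀ j ≤ n, P.pB (D j v) = 0)
    (x : R) : hdDefect D n (P.pM x) v = 0 := by
  refine H.hdDefect_eq_zero_of_mul_eq_zero ?_ fun i hi j hj => ?_
  · rw [pM_mul_eq_mul_pB, ← H.zero_apply v, hv 0 (Nat.zero_le n), mul_zero]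
  · rw [← (H.part i hi).adapted.map_pM x, pM_mul_eq_mul_pB, hv j hj, mul_zero]

lemma hdDefect_pN_right (H : P.LeibnizStep L D n) {u : R} (hu : ∀ i ≤ n, P.pB (D i u) = 0)
    (y : R) : hdDefect D n u (P.pN y) = 0 := by
  refine H.hdDefect_eq_zero_of_mul_eq_zero ?_ fun i hi j hj => ?_
  · rw [mul_pN_eq_pB_mul, ← H.zero_apply u, hu 0 (Nat.zero_le n), zero_mul]
  · rw [← (H.part j hj).adapted.map_pN y, mul_pN_eq_pB_mul, hu i hi, zero_mul]

lemma hdDefect_pM_left_eq_zero (hL : IsLieHigherDerivation 𝕜 R L) (H : P.LeibnizStep L D n)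
    (x y : R) : hdDefect D n (P.pM x) y = 0 := by
  have hB : hdDefect D n (P.pB y) (P.pM x) = 0 :=
    H.swap.hdDefect_pN_right (fun i hi => (H.part i hi).adapted.pA_map_pB y) x
  rw [← P.pA_add_pM_add_pN_add_pB y, H.hdDefect_add_right, H.hdDefect_add_right,
    H.hdDefect_add_right, H.hdDefect_comm hL _ (P.pB y),
    H.hdDefect_pM_left (fun j hj => (H.part j hj).adapted.pB_map_pA y),
    H.hdDefect_pM_left (fun j hj => (H.part j hj).adapted.pB_map_pM y),
    H.hdDefect_pM_left (fun j hj => (H.part j hj).adapted.pB_map_pN y), hB]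
  simp

lemma hdDefect_pN_left_eq_zero (hL : IsLieHigherDerivation 𝕜 R L) (H : P.LeibnizStep L D n)
    (x y : R) : hdDefect D n (P.pN x) y = 0 :=
  H.swap.hdDefect_pM_left_eq_zero hL x y

lemma hdDefect_pM_right_eq_zero (hL : IsLieHigherDerivation 𝕜 R L) (H : P.LeibnizStep L D n)
    (x y : R) : hdDefect D n x (P.pM y) = 0 := by
  rw [H.hdDefect_comm hL]
  exact H.hdDefect_pM_left_eq_zero hL y x

lemma hdDefect_pN_right_eq_zero (hL : IsLieHigherDerivation 𝕜 R L) (H : P.LeibnizStep L D n)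
    (x y : R) : hdDefect D n x (P.pN y) = 0 :=
  H.swap.hdDefect_pM_right_eq_zero hL x y

/-- The two defects are equal, and they are minus a sum lying in `eRf` and minus a sum lying
in `fRe`. -/
lemma hdDefect_pA_pB (hL : IsLieHigherDerivation 𝕜 R L) (H : P.LeibnizStep L D n) (x y : R) :
    hdDefect D n (P.pA x) (P.pB y) = 0 ∧ hdDefect D n (P.pB y) (P.pA x) = 0 := by
  have hAB : hdDefect D n (P.pA x) (P.pB y) =
      -∑ ij ∈ antidiagonal n, D ij.1 (P.pA x) * D ij.2 (P.pB y) := by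
    rw [hdDefect, P.pA_mul_pB, H.apply_zero le_rfl, zero_sub]
  have hBA : hdDefect D n (P.pB y) (P.pA x) =
      -∑ ij ∈ antidiagonal n, D ij.1 (P.pB y) * D ij.2 (P.pA x) := by
    rw [hdDefect, P.pB_mul_pA, H.apply_zero le_rfl, zero_sub]
  have hsymm := H.hdDefect_comm hL (P.pA x) (P.pB y)
  rw [hAB, hBA, neg_inj] at hsymm
  obtain ⟨h₁, h₂, h₃⟩ := sum_mem_pM (fun i hi => (H.part i hi).adapted.pB_map_pA x)
    (fun j hj => (H.part j hj).adapted.pA_map_pB y)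
  have h₄ : P.pM (∑ ij ∈ antidiagonal n, D ij.1 (P.pB y) * D ij.2 (P.pA x)) = 0 :=
    (sum_mem_pM (P := P.swap) (fun i hi => (H.part i hi).adapted.pA_map_pB y)
      (fun j hj => (H.part j hj).adapted.pB_map_pA x)).2.2
  have hzero : ∑ ij ∈ antidiagonal n, D ij.1 (P.pA x) * D ij.2 (P.pB y) = 0 :=
    P.eq_iff_projections_eq.2 ⟨by rw [h₁, map_zero], by rw [hsymm, h₄, map_zero],
      by rw [h₃, map_zero], by rw [h₂, map_zero]⟩
  rw [hAB, hBA, ← hsymm, hzero, neg_zero]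
  exact ⟨rfl, rfl⟩

/-- The cocycle identity and the vanishing on the other Peirce pairs show that `X` is
annihilated by `eRf` on the right, by `fRe` on the left and by `f` on both sides. -/
lemma hdDefect_pA_pA (hA : P.FaithfulCorner) (hL : IsLieHigherDerivation 𝕜 R L)
    (H : P.LeibnizStep L D n) (x y : R) : hdDefect D n (P.pA x) (P.pA y) = 0 := by
  set X := hdDefect D n (P.pA x) (P.pA y)
  have cocycle := hdDefect_cocycle D H.zero_apply H.hdDefect_lt
  have hf : P.pB P.f = P.f := by simp [pB_apply]
  have hXM : ∀ z, X * P.pM z = 0 := by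
    intro z
    have h := cocycle (P.pA x) (P.pA y) (P.pM z)
    have hvm : P.pA y * P.pM z = P.pM (P.pA y * P.pM z) := by simp [pM_mul]
    rwa [hvm, H.hdDefect_pM_right_eq_zero hL, H.hdDefect_pM_right_eq_zero hL,
      H.hdDefect_pM_right_eq_zero hL, mul_zero, zero_add, add_zero] at h
  have hNX : ∀ z, P.pN z * X = 0 := by
    intro z
    have h := cocycle (P.pN z) (P.pA x) (P.pA y)
    have hnu : P.pN z * P.pA x = P.pN (P.pN z * P.pA x) := by simp [pN_mul]
    rwa [hnu, H.hdDefect_pN_left_eq_zero hL, H.hdDefect_pN_left_eq_zero hL,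
      H.hdDefect_pN_left_eq_zero hL, zero_mul, zero_add, zero_add, eq_comm] at h
  have hXf : X * P.f = 0 := by
    have h := cocycle (P.pA x) (P.pA y) P.f
    rw [← map_mul, P.pA_mul_f, H.hdDefect_zero_right, ← hf, (H.hdDefect_pA_pB hL _ _).1,
      (H.hdDefect_pA_pB hL _ _).1, mul_zero, zero_add, add_zero] at h
    rwa [hf] at h
  have hfX : P.f * X = 0 := by
    have h := cocycle P.f (P.pA x) (P.pA y)
    rw [← map_mul, P.f_mul_pA, H.hdDefect_zero_left, ← hf, (H.hdDefect_pA_pB hL _ _).2,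
      (H.hdDefect_pA_pB hL _ _).2, zero_mul, zero_add, zero_add, eq_comm, hf] at h
    exact h
  have hXA : P.pA X = X := by
    conv_rhs => rw [← P.pA_add_pM_add_pN_add_pB X]
    rw [pM_apply, pN_apply, pB_apply, mul_assoc, hXf, hfX]
    simp
  rw [← hXA]
  exact hA X (fun z => by rw [hXA, hXM]) (fun z => by rw [hXA, hNX])

theorem hdDefect_eq_zero (hA : P.FaithfulCorner) (hB : P.swap.FaithfulCorner)
    (hL : IsLieHigherDerivation 𝕜 R L) (H : P.LeibnizStep L D n) (x y : R) :
    hdDefect D n x y = 0 := by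
  have hdiag : ∀ u, (∀ y, hdDefect D n u (P.pA y) = 0) → (∀ y, hdDefect D n u (P.pB y) = 0) →
      hdDefect D n u y = 0 := by
    intro u hu hu'
    rw [← P.pA_add_pM_add_pN_add_pB y, H.hdDefect_add_right, H.hdDefect_add_right,
      H.hdDefect_add_right, hu, hu', H.hdDefect_pM_right_eq_zero hL,
      H.hdDefect_pN_right_eq_zero hL]
    simp
  rw [← P.pA_add_pM_add_pN_add_pB x, H.hdDefect_add_left, H.hdDefect_add_left,
    H.hdDefect_add_left, H.hdDefect_pM_left_eq_zero hL, H.hdDefect_pN_left_eq_zero hL,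
    hdiag _ (H.hdDefect_pA_pA hA hL x) (fun y => (H.hdDefect_pA_pB hL x y).1),
    hdiag _ (fun y => (H.hdDefect_pA_pB hL y x).2) (H.swap.hdDefect_pA_pA hB hL x)]
  simp

end LeibnizStep

end LeibnizRule

section Induction

variable {𝕜 R : Type*} [CommRing 𝕜] [Ring R] [Algebra 𝕜 R] {P : TrivialPeirce R}
  {L : ℕ → R →ₗ[𝕜] R}

variable (P L) in
structure IsProperAt (k : ℕ) : Prop where
  part : P.IsAdaptedPart L (P.der L) k
  der_e : 0 < k → P.OffDiag (P.der L k P.e)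
  tau_linear : IsLinearMap 𝕜 (P.tau L k)
  tau_commutator : ∀ x y, P.tau L k (x * y - y * x) = 0
  hdDefect_eq_zero : ∀ x y, hdDefect (P.der L) k x y = 0

lemma tau_zero (hA : P.FaithfulCorner) (hB : P.swap.FaithfulCorner)
    (hL : IsLieHigherDerivation 𝕜 R L) (x : R) : P.tau L 0 x = 0 := by
  have h : ∀ Q : TrivialPeirce R, Q.FaithfulCorner → Q.halfTau L 0 x = 0 := fun Q hQ =>
    halfTau_eq hQ Set.zero_mem_center (by simp [hL.1])
  rw [tau, h P hA, h P.swap hB, add_zero]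

lemma der_zero (hA : P.FaithfulCorner) (hB : P.swap.FaithfulCorner)
    (hL : IsLieHigherDerivation 𝕜 R L) (x : R) : P.der L 0 x = x := by
  rw [der, tau_zero hA hB hL, sub_zero, hL.1, LinearMap.id_apply]

lemma der_add {k : ℕ} (h : IsLinearMap 𝕜 (P.tau L k)) (x y : R) :
    P.der L k (x + y) = P.der L k x + P.der L k y := by
  simp only [der, map_add, h.map_add]
  abel

lemma isProperAt_zero (hA : P.FaithfulCorner) (hB : P.swap.FaithfulCorner)
    (hL : IsLieHigherDerivation 𝕜 R L) : P.IsProperAt L 0 where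
  part := ⟨P.sub_der_mem_center L 0, by
    rw [funext (der_zero hA hB hL)]
    exact ⟨by simp, by simp, by simp, by simp⟩⟩
  der_e := by simp
  tau_linear := by
    rw [funext (tau_zero hA hB hL)]
    exact ⟨by simp, by simp⟩
  tau_commutator x y := tau_zero hA hB hL _
  hdDefect_eq_zero x y := by simp [hdDefect, der_zero hA hB hL]

lemma isProperAt_of_lt (htf : ∀ x : R, x + x = 0 → x = 0) (hA : P.FaithfulCorner)
    (hB : P.swap.FaithfulCorner) (hZA : P.CornerCenterLifts) (hZB : P.swap.CornerCenterLifts)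
    (hL : IsLieHigherDerivation 𝕜 R L) {n : ℕ} (hn : 0 < n)
    (IH : ∀ k < n, P.IsProperAt L k) : P.IsProperAt L n := by
  have hlow : ∀ k < n, P.IsAdaptedPart L (P.der L) k := fun k hk => (IH k hk).part
  have he : ∀ k, 0 < k → k < n → P.OffDiag (P.der L k P.e) :=
    fun k h₀ hk => (IH k hk).der_e h₀
  have hpart : P.IsAdaptedPart L (P.der L) n :=
    ⟨P.sub_der_mem_center L n, adapted_der htf hA hB hZA hZB hL hn hlow he⟩
  have hlin := isLinearMap_tau hA hB hZA hZB hL hlow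
  have hcomm := tau_commutator hA hB hL hlow
  have H : P.LeibnizStep L (P.der L) n :=
    { zero_apply := der_zero hA hB hL
      hdDefect_lt := fun k hk => (IH k hk).hdDefect_eq_zero
      part := fun k hk => (Nat.lt_or_eq_of_le hk).elim (fun hk => (IH k hk).part) (· ▸ hpart)
      map_add := fun k hk => der_add <|
        (Nat.lt_or_eq_of_le hk).elim (fun hk => (IH k hk).tau_linear) (· ▸ hlin)
      map_commutator := fun x y => by rw [der, hcomm, sub_zero] }
  exact ⟨hpart, fun _ => der_e htf hA hB hL hn hlow he, hlin, hcomm, H.hdDefect_eq_zero hA hB hL⟩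

lemma isProperAt (htf : ∀ x : R, x + x = 0 → x = 0) (hA : P.FaithfulCorner)
    (hB : P.swap.FaithfulCorner) (hZA : P.CornerCenterLifts) (hZB : P.swap.CornerCenterLifts)
    (hL : IsLieHigherDerivation 𝕜 R L) (n : ℕ) : P.IsProperAt L n := by
  induction n using Nat.strong_induction_on with
  | _ n IH =>
    rcases Nat.eq_zero_or_pos n with rfl | hn
    · exact isProperAt_zero hA hB hL
    · exact isProperAt_of_lt htf hA hB hZA hZB hL hn IH

theorem isProperLHD (htf : ∀ x : R, x + x = 0 → x = 0) (hA : P.FaithfulCorner)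
    (hB : P.swap.FaithfulCorner) (hZA : P.CornerCenterLifts) (hZB : P.swap.CornerCenterLifts)
    (hL : IsLieHigherDerivation 𝕜 R L) : IsProperLHD 𝕜 R L := by
  have good := isProperAt htf hA hB hZA hZB hL
  let τ : ℕ → R →ₗ[𝕜] R := fun k => IsLinearMap.mk' _ (good k).tau_linear
  refine ⟨fun k => L k - τ k, τ, ⟨?_, fun k x y => ?_⟩, fun k _ => P.tau_mem_center L k,
    fun k _ => (good k).tau_commutator, fun k _ => (sub_add_cancel _ _).symm⟩
  · ext x
    exact der_zero hA hB hL x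
  · exact sub_eq_zero.1 ((good k).hdDefect_eq_zero x y)

end Induction

end TrivialPeirce

theorem trivial_LHD_property_general {𝕜 R : Type*} [CommRing 𝕜] [Ring R] [Algebra 𝕜 R]
    (htf : ∀ x : R, x + x = 0 → x = 0)
    (e : R) (he : e * e = e)
    (hMN : ∀ m ∈ corner e (1 - e), ∀ n ∈ corner (1 - e) e, m * n = 0)
    (hNM : ∀ n ∈ corner (1 - e) e, ∀ m ∈ corner e (1 - e), n * m = 0)
    (hwf : WeaklyFaithful e)
    (hZA : cornerCenter e = (fun z => z * e) '' Set.center R)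
    (hZB : cornerCenter (1 - e) = (fun z => z * (1 - e)) '' Set.center R) :
    HasLHDProperty 𝕜 R := by
  let P : TrivialPeirce R :=
    ⟨e, 1 - e, he, add_sub_cancel e 1, fun x y => hMN _ ⟨x, rfl⟩ _ ⟨y, rfl⟩,
      fun x y => hNM _ ⟨x, rfl⟩ _ ⟨y, rfl⟩⟩
  intro L hL
  exact P.isProperLHD htf (P.faithfulCorner_of hwf.1)
    (P.swap.faithfulCorner_of fun b hb h₁ h₂ => hwf.2 b hb h₂ h₁)
    (P.cornerCenterLifts_of hZA.subset) (P.swap.cornerCenterLifts_of hZB.subset) hL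

/-- Corollary `trivial`, Peirce form. A 2-torsion free, weakly faithful,
trivial (`MN = 0 = NM`) generalized matrix algebra `R` with `Z(eRe) = Z(R)e` and
`Z(fRf) = Z(R)f` has the LHD property. -/
theorem trivial_LHD_property {𝕜 R : Type*} [CommRing 𝕜] [Ring R] [Algebra 𝕜 R]
    (htf : ∀ x : R, x + x = 0 → x = 0)
    (e : R) (he : e * e = e) (he0 : e ≠ 0) (he1 : e ≠ 1)
    (hMN : ∀ m ∈ corner e (1 - e), ∀ n ∈ corner (1 - e) e, m * n = 0)
    (hNM : ∀ n ∈ corner (1 - e) e, ∀ m ∈ corner e (1 - e), n * m = 0)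
    (hwf : WeaklyFaithful e)
    (hZA : cornerCenter e = (fun z => z * e) '' Set.center R)
    (hZB : cornerCenter (1 - e) = (fun z => z * (1 - e)) '' Set.center R) :
    HasLHDProperty 𝕜 R :=
  trivial_LHD_property_general htf e he hMN hNM hwf hZA hZB
end

section
/- Let 𝕜 be a commutative unital ring and let R be a unital 𝕜-algebra with an idempotent e satisfying e ≠ 0 and e ≠ 1; put f = 1 − e, and assume fRe = {0} (so R is a triangular algebra); set A = eRe, B = fRf, M = eRf. A sequence L = {L_k}_{k∈ℕ₀} of 𝕜-linear maps on R with L_0 = id_R is a Lie higher derivation on R if and only if there exist elements m_j ∈ M (j ≥ 1) and, for each k ≥ 1, 𝕜-linear maps p_{1k} : A → A, p_{2k} : B → Z(A), q_{1k} : A → Z(B), q_{2k} : B → B, f_{3k} : M → M such that, with the conventions p_{10} = id_A, q_{20} = id_B, p_{20} = 0, q_{10} = 0, f_{30} = id_M, the following hold for every k ≥ 1: (0) L_k(a + m + b) = p_{1k}(a) + p_{2k}(b) + Σ_{i+j=k, j≥1} ((p_{1i}(a) + p_{2i}(b)) m_j − m_j (q_{1i}(a) + q_{2i}(b))) + f_{3k}(m)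 + q_{1k}(a) + q_{2k}(b) for all a ∈ A, m ∈ M, b ∈ B; (1) {p_{1k}}_{k∈ℕ₀} and {q_{2k}}_{k∈ℕ₀} are Lie higher derivations on A and on B, respectively; (2) q_{1k}([a,a']) = 0 for all a, a' ∈ A and p_{2k}([b,b']) = 0 for all b, b' ∈ B; (3) f_{3k}(am) = Σ_{i+j=k} (p_{1i}(a) f_{3j}(m) − f_{3j}(m) q_{1i}(a)) and f_{3k}(mb) = Σ_{i+j=k} (f_{3j}(m) q_{2i}(b) − p_{2i}(b) f_{3j}(m)) for all a ∈ A, b ∈ B, m ∈ M. -/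
open Finset

/-!
Read a sequence `L` as the power series `∑ L k Xᵏ` over the ring `Module.End 𝕜 R`: the
convolution `∑_{i+j=k} L i ∘ L' j` is then the product of series, and the product of two Lie
higher derivations is again one. For `m` with values in `M = eRf` the series
`innerSeries m = 1 + ∑ ad (m k) Xᵏ` is a Lie higher derivation, and it is inverted by
`innerSeries (-m)` because `ad m ∘ ad m' = 0` when `fRe = 0`.

Given a Lie higher derivation `L`, choose `m` recursively so that `Φ = innerSeries m * L` has no
`eRf`-component at `e`. Taking Peirce components of the identities for `⁅e, x⁆`, `⁅e, a⁆` and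
`⁅a, b⁆`, induction on the degree shows that `Φ` maps `M` into `M` and `A`, `B` into `A + B`, with
central parts `B → A` and `A → B`. Hence `Φ` is the sum of its Peirce blocks `p1, p2, q1, q2, f3`,
these satisfy (1)–(3), and expanding `L = innerSeries (-m) * Φ` gives (0). Conversely, (1)–(3)
make the sum of the blocks a Lie higher derivation, as one checks on each Peirce component of a
commutator, and (0) says that `L` is its product with `innerSeries (-m)`.
-/

open PowerSeries

theorem Finset.Nat.sum_antidiagonal_antidiagonal_antidiagonal {M : Type*} [AddCommMonoid M]
    (k : ℕ) (F : ℕ → ℕ → ℕ → ℕ → M) :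
    ∑ ij ∈ antidiagonal k, ∑ uv ∈ antidiagonal ij.2, ∑ pq ∈ antidiagonal ij.1,
        F pq.1 pq.2 uv.1 uv.2 =
      ∑ st ∈ antidiagonal k, ∑ qv ∈ antidiagonal st.2, ∑ pu ∈ antidiagonal st.1,
        F pu.1 qv.1 pu.2 qv.2 := by
  simp only [Finset.sum_sigma']
  refine Finset.sum_nbij'
    (fun ⟨_, ⟨u, v⟩, ⟨p, q⟩⟩ => ⟨(p + u, q + v), (q, v), (p, u)⟩)
    (fun ⟨_, ⟨q, v⟩, ⟨p, u⟩⟩ => ⟨(p + q, u + v), (u, v), (p, q)⟩) ?_ ?_ ?_ ?_ ?_ <;>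
    rintro ⟨⟨i, j⟩, ⟨u, v⟩, ⟨p, q⟩⟩ h <;>
    simp only [Finset.mem_sigma, Finset.HasAntidiagonal.mem_antidiagonal, Sigma.mk.injEq,
      Prod.mk.injEq, heq_eq_eq, and_true] at h ⊢ <;>
    omega

theorem Finset.Nat.sum_antidiagonal_eq_add_of_ne_zero {M : Type*} [AddCommMonoid M] {k : ℕ}
    (hk : k ≠ 0) {F : ℕ × ℕ → M} (h : ∀ i j, i + j = k → i ≠ 0 → j ≠ 0 → F (i, j) = 0) :
    ∑ ij ∈ antidiagonal k, F ij = F (0, k) + F (k, 0) := by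
  refine Finset.sum_eq_add_of_mem (0, k) (k, 0) (by simp) (by simp) (by simp; omega) ?_
  rintro ⟨i, j⟩ hij ⟨hi, hj⟩
  rw [Finset.HasAntidiagonal.mem_antidiagonal] at hij
  exact h i j hij (fun h0 => hi (by simp only [Prod.mk.injEq]; omega))
    (fun h0 => hj (by simp only [Prod.mk.injEq]; omega))

theorem Finset.Nat.sum_antidiagonal_eq_of_snd_lt {M : Type*} [AddCommMonoid M] {k : ℕ}
    {F : ℕ × ℕ → M} (h : ∀ i j, i + j = k → j < k → F (i, j) = 0) :
    ∑ ij ∈ antidiagonal k, F ij = F (0, k) := by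
  refine Finset.sum_eq_single_of_mem (0, k) (by simp) fun ⟨i, j⟩ hij hne => ?_
  rw [Finset.HasAntidiagonal.mem_antidiagonal] at hij
  exact h i j hij (lt_of_le_of_ne (by omega) fun hj => hne (by simp only [Prod.mk.injEq]; omega))

theorem Finset.Nat.sum_antidiagonal_eq_of_fst_lt {M : Type*} [AddCommMonoid M] {k : ℕ}
    {F : ℕ × ℕ → M} (h : ∀ i j, i + j = k → i < k → F (i, j) = 0) :
    ∑ ij ∈ antidiagonal k, F ij = F (k, 0) := by
  refine Finset.sum_eq_single_of_mem (k, 0) (by simp) fun ⟨i, j⟩ hij hne => ?_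
  rw [Finset.HasAntidiagonal.mem_antidiagonal] at hij
  exact h i j hij (lt_of_le_of_ne (by omega) fun hi => hne (by simp only [Prod.mk.injEq]; omega))

-- The ring commutator as a Lie bracket on `R`; kept local so that the final statement is
-- elaborated with the ring's own instances.
section RingCommutator

attribute [local instance] LieRing.ofAssociativeRing

section LieHigherDerivation

variable {𝕜 R : Type*} [CommRing 𝕜] [Ring R] [Algebra 𝕜 R]

theorem isLieHigherDerivation_iff_lie {L : ℕ → Module.End 𝕜 R} :
    IsLieHigherDerivation 𝕜 R L ↔ L 0 = LinearMap.id ∧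
      ∀ k (x y : R), L k ⁅x, y⁆ = ∑ ij ∈ antidiagonal k, ⁅L ij.1 x, L ij.2 y⁆ := by
  simp only [IsLieHigherDerivation, Ring.lie_def]

theorem IsLieHigherDerivation.apply_lie {L : ℕ → Module.End 𝕜 R}
    (hL : IsLieHigherDerivation 𝕜 R L) (k : ℕ) (x y : R) :
    L k ⁅x, y⁆ = ∑ ij ∈ antidiagonal k, ⁅L ij.1 x, L ij.2 y⁆ :=
  (isLieHigherDerivation_iff_lie.mp hL).2 k x y

theorem IsLieHigherDerivation.mul {Φ Ψ : (Module.End 𝕜 R)⟦X⟧}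
    (hΦ : IsLieHigherDerivation 𝕜 R (coeff · Φ)) (hΨ : IsLieHigherDerivation 𝕜 R (coeff · Ψ)) :
    IsLieHigherDerivation 𝕜 R (coeff · (Φ * Ψ)) := by
  rw [isLieHigherDerivation_iff_lie] at *
  refine ⟨by simp [coeff_mul, hΦ.1, hΨ.1, Module.End.one_eq_id.symm], fun k x y => ?_⟩
  simp only [coeff_mul, LinearMap.sum_apply, Module.End.mul_apply, hΨ.2, map_sum, hΦ.2, sum_lie,
    lie_sum]
  exact Finset.Nat.sum_antidiagonal_antidiagonal_antidiagonal k
    fun p q u v => ⁅coeff p Φ (coeff u Ψ x), coeff q Φ (coeff v Ψ y)⁆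

end LieHigherDerivation

section Corner

variable {R : Type*} [Ring R] {u v w x y : R}

theorem mem_corner_iff (hu : IsIdempotentElem u) (hv : IsIdempotentElem v) :
    x ∈ corner u v ↔ u * x * v = x := by
  refine ⟨?_, fun h => ⟨x, h⟩⟩
  rintro ⟨r, rfl⟩
  simp only [mul_assoc, hu.mul_self_mul, hv.eq]

theorem neg_mem_corner (hx : x ∈ corner u v) : -x ∈ corner u v := by
  obtain ⟨r, rfl⟩ := hx
  exact ⟨-r, by simp only [mul_neg, neg_mul]⟩

theorem zero_mem_cornerCenter : (0 : R) ∈ cornerCenter u :=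
  ⟨⟨0, by simp only [mul_zero, zero_mul]⟩, fun _ _ => by simp only [zero_mul, mul_zero]⟩

theorem mul_mem_corner (hx : x ∈ corner u v) (hy : y ∈ corner v w) : x * y ∈ corner u w := by
  obtain ⟨r, rfl⟩ := hx
  obtain ⟨r', rfl⟩ := hy
  exact ⟨r * v * (v * r'), by simp only [mul_assoc]⟩

theorem mul_mul_eq_zero_of_mem_corner_left {s : R} (hx : x ∈ corner u v) (h : s * u = 0) (t : R) :
    s * x * t = 0 := by
  obtain ⟨r, rfl⟩ := hx
  simp only [← mul_assoc, h, zero_mul]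

theorem mul_mul_eq_zero_of_mem_corner_right {t : R} (hx : x ∈ corner u v) (h : v * t = 0) (s : R) :
    s * x * t = 0 := by
  obtain ⟨r, rfl⟩ := hx
  simp only [mul_assoc, h, mul_zero]

theorem mul_eq_zero_of_mem_corner {u' v' : R} (hx : x ∈ corner u v) (hy : y ∈ corner u' v')
    (h : v * u' = 0) : x * y = 0 := by
  obtain ⟨r, rfl⟩ := hx
  obtain ⟨r', rfl⟩ := hy
  simp only [mul_assoc, ← mul_assoc v u', h, zero_mul, mul_zero]

theorem lie_add_add_of_mem_cornerCenter {p p' c c' : R} (hp : p ∈ corner u u)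
    (hp' : p' ∈ corner u u) (hc : c ∈ cornerCenter u) (hc' : c' ∈ cornerCenter u) :
    ⁅p + c, p' + c'⁆ = ⁅p, p'⁆ := by
  rw [Ring.lie_def, Ring.lie_def]
  simp only [add_mul, mul_add, hc'.2 p hp, hc.2 p' hp', hc.2 c' hc'.1]
  abel

end Corner

section Triangular

variable {R : Type*} [Ring R] {e : R}

theorem peirce_decomposition (htri : ∀ r : R, (1 - e) * r * e = 0) (x : R) :
    e * x * e + e * x * (1 - e) + (1 - e) * x * (1 - e) = x := by
  rw [← sub_eq_zero, ← neg_eq_zero, ← htri x]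
  noncomm_ring

theorem mul_eq_peirce_ee (htri : ∀ r : R, (1 - e) * r * e = 0) (x : R) : x * e = e * x * e := by
  rw [← sub_eq_zero, ← htri x]
  noncomm_ring

theorem one_sub_mul_eq_peirce_ff (htri : ∀ r : R, (1 - e) * r * e = 0) (x : R) :
    (1 - e) * x = (1 - e) * x * (1 - e) := by
  rw [← sub_eq_zero, ← htri x]
  noncomm_ring

theorem peirce_ee_mul (he : IsIdempotentElem e) (htri : ∀ r : R, (1 - e) * r * e = 0)
    (x y : R) : e * (x * y) * e = e * x * e * (e * y * e) := by
  simp only [mul_assoc]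
  rw [mul_eq_peirce_ee htri y]
  simp only [mul_assoc, he.mul_self_mul]

theorem peirce_ff_mul (he : IsIdempotentElem e) (htri : ∀ r : R, (1 - e) * r * e = 0)
    (x y : R) :
    (1 - e) * (x * y) * (1 - e) = (1 - e) * x * (1 - e) * ((1 - e) * y * (1 - e)) := by
  rw [← mul_assoc, one_sub_mul_eq_peirce_ff htri x]
  simp only [mul_assoc, he.one_sub.mul_self_mul]

theorem peirce_ef_mul (he : IsIdempotentElem e) (x y : R) :
    e * (x * y) * (1 - e) =
      e * x * e * (e * y * (1 - e)) + e * x * (1 - e) * ((1 - e) * y * (1 - e)) := by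
  simp only [mul_assoc, he.mul_self_mul, he.one_sub.mul_self_mul]
  noncomm_ring

theorem peirce_ee_lie (he : IsIdempotentElem e) (htri : ∀ r : R, (1 - e) * r * e = 0)
    (x y : R) : e * ⁅x, y⁆ * e = ⁅e * x * e, e * y * e⁆ := by
  rw [Ring.lie_def, Ring.lie_def, ← peirce_ee_mul he htri, ← peirce_ee_mul he htri]
  noncomm_ring

theorem peirce_ff_lie (he : IsIdempotentElem e) (htri : ∀ r : R, (1 - e) * r * e = 0)
    (x y : R) :
    (1 - e) * ⁅x, y⁆ * (1 - e) = ⁅(1 - e) * x * (1 - e), (1 - e) * y * (1 - e)⁆ := by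
  rw [Ring.lie_def, Ring.lie_def, ← peirce_ff_mul he htri, ← peirce_ff_mul he htri]
  noncomm_ring

theorem peirce_ef_lie (he : IsIdempotentElem e) (x y : R) :
    e * ⁅x, y⁆ * (1 - e) =
      e * x * e * (e * y * (1 - e)) + e * x * (1 - e) * ((1 - e) * y * (1 - e)) -
        (e * y * e * (e * x * (1 - e)) + e * y * (1 - e) * ((1 - e) * x * (1 - e))) := by
  rw [Ring.lie_def, ← peirce_ef_mul he, ← peirce_ef_mul he]
  noncomm_ring

theorem lie_eq_of_mem_ef (he : IsIdempotentElem e) (htri : ∀ r : R, (1 - e) * r * e = 0)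
    {m : R} (hm : m ∈ corner e (1 - e)) (z : R) :
    ⁅m, z⁆ = m * ((1 - e) * z * (1 - e)) - e * z * e * m := by
  obtain ⟨r, rfl⟩ := hm
  rw [Ring.lie_def, mul_assoc _ (1 - e), one_sub_mul_eq_peirce_ff htri, ← mul_assoc z,
    ← mul_assoc z, mul_eq_peirce_ee htri]
  simp only [mul_assoc, he.mul_self_mul, he.one_sub.mul_self_mul, he.one_sub.eq]

theorem lie_mem_ef (he : IsIdempotentElem e) (htri : ∀ r : R, (1 - e) * r * e = 0)
    {m : R} (hm : m ∈ corner e (1 - e)) (z : R) : ⁅m, z⁆ ∈ corner e (1 - e) := by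
  obtain ⟨r, rfl⟩ := hm
  refine ⟨r * (1 - e) * z - z * e * r, ?_⟩
  beta_reduce
  rw [lie_eq_of_mem_ef he htri ⟨r, rfl⟩, mul_sub e, sub_mul _ _ (1 - e)]
  simp only [mul_assoc, he.mul_self_mul, he.one_sub.mul_self_mul]

theorem lie_eq_zero_of_mem_ef (he : IsIdempotentElem e) {m m' : R}
    (hm : m ∈ corner e (1 - e)) (hm' : m' ∈ corner e (1 - e)) : ⁅m, m'⁆ = 0 := by
  rw [Ring.lie_def, mul_eq_zero_of_mem_corner hm hm' he.one_sub_mul_self,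
    mul_eq_zero_of_mem_corner hm' hm he.one_sub_mul_self, sub_zero]

end Triangular

section Blocks

variable {R : Type*} [Ring R] {e a x b : R}

theorem peirce_of_mem_ee (he : IsIdempotentElem e) (ha : a ∈ corner e e) :
    e * a * e = a ∧ e * a * (1 - e) = 0 ∧ (1 - e) * a * (1 - e) = 0 :=
  ⟨(mem_corner_iff he he).mp ha, mul_mul_eq_zero_of_mem_corner_right ha he.mul_one_sub_self e,
    mul_mul_eq_zero_of_mem_corner_left ha he.one_sub_mul_self _⟩

theorem peirce_of_mem_ef (he : IsIdempotentElem e) (hx : x ∈ corner e (1 - e)) :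
    e * x * e = 0 ∧ e * x * (1 - e) = x ∧ (1 - e) * x * (1 - e) = 0 :=
  ⟨mul_mul_eq_zero_of_mem_corner_right hx he.one_sub_mul_self e,
    (mem_corner_iff he he.one_sub).mp hx,
    mul_mul_eq_zero_of_mem_corner_left hx he.one_sub_mul_self _⟩

theorem peirce_of_mem_ff (he : IsIdempotentElem e) (hb : b ∈ corner (1 - e) (1 - e)) :
    e * b * e = 0 ∧ e * b * (1 - e) = 0 ∧ (1 - e) * b * (1 - e) = b :=
  ⟨mul_mul_eq_zero_of_mem_corner_left hb he.mul_one_sub_self e,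
    mul_mul_eq_zero_of_mem_corner_left hb he.mul_one_sub_self _,
    (mem_corner_iff he.one_sub he.one_sub).mp hb⟩

theorem peirce_of_mem_add (he : IsIdempotentElem e) (ha : a ∈ corner e e)
    (hx : x ∈ corner e (1 - e)) (hb : b ∈ corner (1 - e) (1 - e)) :
    e * (a + x + b) * e = a ∧ e * (a + x + b) * (1 - e) = x ∧
      (1 - e) * (a + x + b) * (1 - e) = b := by
  obtain ⟨ha₁, ha₂, ha₃⟩ := peirce_of_mem_ee he ha
  obtain ⟨hx₁, hx₂, hx₃⟩ := peirce_of_mem_ef he hx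
  obtain ⟨hb₁, hb₂, hb₃⟩ := peirce_of_mem_ff he hb
  simp only [mul_add, add_mul, ha₁, ha₂, ha₃, hx₁, hx₂, hx₃, hb₁, hb₂, hb₃, add_zero, zero_add,
    and_self]

theorem lie_idem_eq_self_of_mem_ef (he : IsIdempotentElem e) (hx : x ∈ corner e (1 - e)) :
    ⁅e, x⁆ = x := by
  obtain ⟨r, rfl⟩ := hx
  simp only [Ring.lie_def, mul_assoc, he.mul_self_mul, he.one_sub_mul_self, mul_zero, sub_zero]

theorem lie_idem_eq_zero_of_mem_ee (he : IsIdempotentElem e) (ha : a ∈ corner e e) :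
    ⁅e, a⁆ = 0 := by
  obtain ⟨r, rfl⟩ := ha
  simp only [Ring.lie_def, mul_assoc, he.mul_self_mul, he.eq, sub_self]

theorem lie_idem_eq_zero_of_mem_ff (he : IsIdempotentElem e) (hb : b ∈ corner (1 - e) (1 - e)) :
    ⁅e, b⁆ = 0 := by
  obtain ⟨r, rfl⟩ := hb
  rw [Ring.lie_def, ← mul_assoc, ← mul_assoc, he.mul_one_sub_self, mul_assoc _ (1 - e) e,
    he.one_sub_mul_self]
  simp

theorem lie_eq_zero_of_mem_ee_of_mem_ff (he : IsIdempotentElem e) (ha : a ∈ corner e e)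
    (hb : b ∈ corner (1 - e) (1 - e)) : ⁅a, b⁆ = 0 := by
  rw [Ring.lie_def, mul_eq_zero_of_mem_corner ha hb he.mul_one_sub_self,
    mul_eq_zero_of_mem_corner hb ha he.one_sub_mul_self, sub_self]

end Blocks

section InnerSeries

variable {𝕜 R : Type*} [CommRing 𝕜] [Ring R] [Algebra 𝕜 R] {e : R} {m : ℕ → R}

variable (𝕜) in
def innerSeries (m : ℕ → R) : (Module.End 𝕜 R)⟦X⟧ :=
  mk fun k => if k = 0 then LinearMap.id else LieAlgebra.ad 𝕜 R (m k)

theorem coeff_innerSeries_apply (m : ℕ → R) (k : ℕ) (z : R) :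
    coeff k (innerSeries 𝕜 m) z = if k = 0 then z else ⁅m k, z⁆ := by
  rw [innerSeries, coeff_mk]
  split_ifs <;> simp

theorem innerSeries_neg_mul (he : IsIdempotentElem e) (htri : ∀ r : R, (1 - e) * r * e = 0)
    (hm : ∀ j, 1 ≤ j → m j ∈ corner e (1 - e)) :
    innerSeries 𝕜 (-m) * innerSeries 𝕜 m = 1 := by
  ext k z
  simp only [coeff_mul, coeff_one, LinearMap.sum_apply, Module.End.mul_apply,
    coeff_innerSeries_apply]
  rcases eq_or_ne k 0 with rfl | hk
  · simp
  rw [Finset.Nat.sum_antidiagonal_eq_add_of_ne_zero hk]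
  · simp only [if_pos, if_neg hk, Pi.neg_apply, neg_lie, add_neg_cancel, LinearMap.zero_apply]
  · intro i j _ hi hj
    simp only [if_neg hi, if_neg hj, Pi.neg_apply, neg_lie, neg_eq_zero]
    exact lie_eq_zero_of_mem_ef he (hm i (by omega)) (lie_mem_ef he htri (hm j (by omega)) z)

theorem isLieHigherDerivation_innerSeries (he : IsIdempotentElem e)
    (htri : ∀ r : R, (1 - e) * r * e = 0) (hm : ∀ j, 1 ≤ j → m j ∈ corner e (1 - e)) :
    IsLieHigherDerivation 𝕜 R (coeff · (innerSeries 𝕜 m)) := by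
  rw [isLieHigherDerivation_iff_lie]
  refine ⟨LinearMap.ext fun z => coeff_innerSeries_apply m 0 z, fun k x y => ?_⟩
  rcases eq_or_ne k 0 with rfl | hk
  · simp only [Finset.Nat.antidiagonal_zero, Finset.sum_singleton, coeff_innerSeries_apply, if_pos]
  rw [Finset.Nat.sum_antidiagonal_eq_add_of_ne_zero hk]
  · simp only [coeff_innerSeries_apply, if_pos, if_neg hk]
    rw [leibniz_lie, add_comm]
  · intro i j _ hi hj
    simp only [coeff_innerSeries_apply, if_neg hi, if_neg hj]
    exact lie_eq_zero_of_mem_ef he (lie_mem_ef he htri (hm i (by omega)) x)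
      (lie_mem_ef he htri (hm j (by omega)) y)

theorem coeff_innerSeries_mul_apply (m : ℕ → R) (Ψ : (Module.End 𝕜 R)⟦X⟧) (k : ℕ) (z : R) :
    coeff k (innerSeries 𝕜 m * Ψ) z =
      coeff k Ψ z + ∑ ij ∈ (antidiagonal k).filter (fun ij => 1 ≤ ij.2),
        ⁅m ij.2, coeff ij.1 Ψ z⁆ := by
  rw [coeff_mul, LinearMap.sum_apply, ← Finset.Nat.sum_antidiagonal_swap,
    ← Finset.sum_filter_add_sum_filter_not _ (fun ij => 1 ≤ ij.2), add_comm]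
  have hfilter : (antidiagonal k).filter (fun ij => ¬1 ≤ ij.2) = {(k, 0)} := by
    ext ⟨i, j⟩
    simp only [Finset.mem_filter, Finset.HasAntidiagonal.mem_antidiagonal,
      Finset.mem_singleton, Prod.mk.injEq]
    omega
  rw [hfilter, Finset.sum_singleton]
  congr 1
  · simp only [Prod.swap_prod_mk, Module.End.mul_apply, coeff_innerSeries_apply, if_pos]
  · refine Finset.sum_congr rfl fun ij hij => ?_
    rw [Finset.mem_filter] at hij
    simp [coeff_innerSeries_apply, show ij.2 ≠ 0 by omega]

end InnerSeries

section BlockSum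

variable {𝕜 R : Type*} [CommRing 𝕜] [Ring R] [Algebra 𝕜 R] {e : R}
  {p1 p2 q1 q2 f3 : ℕ → Module.End 𝕜 R}

variable (𝕜) in
def blockSum (e : R) (p1 p2 q1 q2 f3 : ℕ → Module.End 𝕜 R) (k : ℕ) : Module.End 𝕜 R :=
  p1 k ∘ₗ LinearMap.mulLeftRight 𝕜 (e, e) + p2 k ∘ₗ LinearMap.mulLeftRight 𝕜 (1 - e, 1 - e) +
    f3 k ∘ₗ LinearMap.mulLeftRight 𝕜 (e, 1 - e) + q1 k ∘ₗ LinearMap.mulLeftRight 𝕜 (e, e) +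
    q2 k ∘ₗ LinearMap.mulLeftRight 𝕜 (1 - e, 1 - e)

theorem blockSum_apply (k : ℕ) (z : R) :
    blockSum 𝕜 e p1 p2 q1 q2 f3 k z =
      p1 k (e * z * e) + p2 k ((1 - e) * z * (1 - e)) + f3 k (e * z * (1 - e)) +
        q1 k (e * z * e) + q2 k ((1 - e) * z * (1 - e)) :=
  rfl

structure IsTriangularBlockData (e : R) (p1 p2 q1 q2 f3 : ℕ → Module.End 𝕜 R) : Prop where
  p1_mem : ∀ i, ∀ a ∈ corner e e, p1 i a ∈ corner e e
  p2_mem : ∀ i, ∀ b ∈ corner (1 - e) (1 - e), p2 i b ∈ cornerCenter e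
  q1_mem : ∀ i, ∀ a ∈ corner e e, q1 i a ∈ cornerCenter (1 - e)
  q2_mem : ∀ i, ∀ b ∈ corner (1 - e) (1 - e), q2 i b ∈ corner (1 - e) (1 - e)
  f3_mem : ∀ i, ∀ x ∈ corner e (1 - e), f3 i x ∈ corner e (1 - e)

namespace IsTriangularBlockData

variable (hB : IsTriangularBlockData e p1 p2 q1 q2 f3) (he : IsIdempotentElem e)
include hB he

theorem peirce_blockSum (i : ℕ) (z : R) :
    e * blockSum 𝕜 e p1 p2 q1 q2 f3 i z * e = p1 i (e * z * e) + p2 i ((1 - e) * z * (1 - e)) ∧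
    e * blockSum 𝕜 e p1 p2 q1 q2 f3 i z * (1 - e) = f3 i (e * z * (1 - e)) ∧
    (1 - e) * blockSum 𝕜 e p1 p2 q1 q2 f3 i z * (1 - e) =
      q1 i (e * z * e) + q2 i ((1 - e) * z * (1 - e)) := by
  obtain ⟨hp1₁, hp1₂, hp1₃⟩ := peirce_of_mem_ee he (hB.p1_mem i _ ⟨z, rfl⟩)
  obtain ⟨hp2₁, hp2₂, hp2₃⟩ := peirce_of_mem_ee he (hB.p2_mem i _ ⟨z, rfl⟩).1
  obtain ⟨hf3₁, hf3₂, hf3₃⟩ := peirce_of_mem_ef he (hB.f3_mem i _ ⟨z, rfl⟩)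
  obtain ⟨hq1₁, hq1₂, hq1₃⟩ := peirce_of_mem_ff he (hB.q1_mem i _ ⟨z, rfl⟩).1
  obtain ⟨hq2₁, hq2₂, hq2₃⟩ := peirce_of_mem_ff he (hB.q2_mem i _ ⟨z, rfl⟩)
  simp only [blockSum_apply, mul_add, add_mul, hp1₁, hp1₂, hp1₃, hp2₁, hp2₂, hp2₃, hf3₁, hf3₂,
    hf3₃, hq1₁, hq1₂, hq1₃, hq2₁, hq2₂, hq2₃, add_zero, zero_add, and_self]

theorem coeff_innerSeries_neg_mul_blockSum_apply (htri : ∀ r : R, (1 - e) * r * e = 0)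
    {m : ℕ → R} (hm : ∀ j, 1 ≤ j → m j ∈ corner e (1 - e)) (k : ℕ) {a x b : R}
    (ha : a ∈ corner e e) (hx : x ∈ corner e (1 - e)) (hb : b ∈ corner (1 - e) (1 - e)) :
    coeff k (innerSeries 𝕜 (-m) * PowerSeries.mk (blockSum 𝕜 e p1 p2 q1 q2 f3)) (a + x + b) =
      p1 k a + p2 k b +
        (∑ ij ∈ (antidiagonal k).filter (fun ij => 1 ≤ ij.2),
          ((p1 ij.1 a + p2 ij.1 b) * m ij.2 - m ij.2 * (q1 ij.1 a + q2 ij.1 b))) +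
        f3 k x + q1 k a + q2 k b := by
  obtain ⟨hA, hM, hB'⟩ := peirce_of_mem_add he ha hx hb
  have hterm : ∀ ij ∈ (antidiagonal k).filter (fun ij => 1 ≤ ij.2),
      ⁅(-m) ij.2, coeff ij.1 (PowerSeries.mk (blockSum 𝕜 e p1 p2 q1 q2 f3)) (a + x + b)⁆ =
        (p1 ij.1 a + p2 ij.1 b) * m ij.2 - m ij.2 * (q1 ij.1 a + q2 ij.1 b) := by
    intro ij hij
    obtain ⟨h₁, -, h₃⟩ := hB.peirce_blockSum he ij.1 (a + x + b)
    rw [coeff_mk, Pi.neg_apply, neg_lie,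
      lie_eq_of_mem_ef he htri (hm _ (Finset.mem_filter.mp hij).2), h₁, h₃, hA, hB', neg_sub]
  rw [coeff_innerSeries_mul_apply, Finset.sum_congr rfl hterm, coeff_mk, blockSum_apply, hA, hM,
    hB']
  abel

theorem peirce_ee_blockSum_lie (htri : ∀ r : R, (1 - e) * r * e = 0)
    (h1a : ∀ k, ∀ a ∈ corner e e, ∀ a' ∈ corner e e,
      p1 k ⁅a, a'⁆ = ∑ ij ∈ antidiagonal k, ⁅p1 ij.1 a, p1 ij.2 a'⁆)
    (h2b : ∀ k, 1 ≤ k → ∀ b ∈ corner (1 - e) (1 - e), ∀ b' ∈ corner (1 - e) (1 - e),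
      p2 k ⁅b, b'⁆ = 0)
    {k : ℕ} (hk : 1 ≤ k) (z z' : R) :
    e * blockSum 𝕜 e p1 p2 q1 q2 f3 k ⁅z, z'⁆ * e =
      e * (∑ ij ∈ antidiagonal k,
        ⁅blockSum 𝕜 e p1 p2 q1 q2 f3 ij.1 z, blockSum 𝕜 e p1 p2 q1 q2 f3 ij.2 z'⁆) * e := by
  rw [(hB.peirce_blockSum he k _).1, peirce_ee_lie he htri, peirce_ff_lie he htri,
    h1a k _ ⟨z, rfl⟩ _ ⟨z', rfl⟩, h2b k hk _ ⟨z, rfl⟩ _ ⟨z', rfl⟩, add_zero, Finset.mul_sum,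
    Finset.sum_mul]
  refine Finset.sum_congr rfl fun ij _ => ?_
  rw [peirce_ee_lie he htri, (hB.peirce_blockSum he _ z).1, (hB.peirce_blockSum he _ z').1,
    lie_add_add_of_mem_cornerCenter (hB.p1_mem _ _ ⟨z, rfl⟩) (hB.p1_mem _ _ ⟨z', rfl⟩)
      (hB.p2_mem _ _ ⟨z, rfl⟩) (hB.p2_mem _ _ ⟨z', rfl⟩)]

theorem peirce_ff_blockSum_lie (htri : ∀ r : R, (1 - e) * r * e = 0)
    (h1b : ∀ k, ∀ b ∈ corner (1 - e) (1 - e), ∀ b' ∈ corner (1 - e) (1 - e),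
      q2 k ⁅b, b'⁆ = ∑ ij ∈ antidiagonal k, ⁅q2 ij.1 b, q2 ij.2 b'⁆)
    (h2a : ∀ k, 1 ≤ k → ∀ a ∈ corner e e, ∀ a' ∈ corner e e, q1 k ⁅a, a'⁆ = 0)
    {k : ℕ} (hk : 1 ≤ k) (z z' : R) :
    (1 - e) * blockSum 𝕜 e p1 p2 q1 q2 f3 k ⁅z, z'⁆ * (1 - e) =
      (1 - e) * (∑ ij ∈ antidiagonal k,
        ⁅blockSum 𝕜 e p1 p2 q1 q2 f3 ij.1 z, blockSum 𝕜 e p1 p2 q1 q2 f3 ij.2 z'⁆) * (1 - e) := by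
  rw [(hB.peirce_blockSum he k _).2.2, peirce_ee_lie he htri, peirce_ff_lie he htri,
    h1b k _ ⟨z, rfl⟩ _ ⟨z', rfl⟩, h2a k hk _ ⟨z, rfl⟩ _ ⟨z', rfl⟩, zero_add, Finset.mul_sum,
    Finset.sum_mul]
  refine Finset.sum_congr rfl fun ij _ => ?_
  rw [peirce_ff_lie he htri, (hB.peirce_blockSum he _ z).2.2, (hB.peirce_blockSum he _ z').2.2,
    add_comm (q1 _ _), add_comm (q1 _ _),
    lie_add_add_of_mem_cornerCenter (hB.q2_mem _ _ ⟨z, rfl⟩) (hB.q2_mem _ _ ⟨z', rfl⟩)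
      (hB.q1_mem _ _ ⟨z, rfl⟩) (hB.q1_mem _ _ ⟨z', rfl⟩)]

theorem peirce_ef_blockSum_lie
    (h3a : ∀ k, 1 ≤ k → ∀ a ∈ corner e e, ∀ x ∈ corner e (1 - e),
      f3 k (a * x) = ∑ ij ∈ antidiagonal k, (p1 ij.1 a * f3 ij.2 x - f3 ij.2 x * q1 ij.1 a))
    (h3b : ∀ k, 1 ≤ k → ∀ x ∈ corner e (1 - e), ∀ b ∈ corner (1 - e) (1 - e),
      f3 k (x * b) = ∑ ij ∈ antidiagonal k, (f3 ij.2 x * q2 ij.1 b - p2 ij.1 b * f3 ij.2 x))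
    {k : ℕ} (hk : 1 ≤ k) (z z' : R) :
    e * blockSum 𝕜 e p1 p2 q1 q2 f3 k ⁅z, z'⁆ * (1 - e) =
      e * (∑ ij ∈ antidiagonal k,
        ⁅blockSum 𝕜 e p1 p2 q1 q2 f3 ij.1 z, blockSum 𝕜 e p1 p2 q1 q2 f3 ij.2 z'⁆) * (1 - e) := by
  set a := e * z * e
  set x := e * z * (1 - e)
  set b := (1 - e) * z * (1 - e)
  set a' := e * z' * e
  set x' := e * z' * (1 - e)
  set b' := (1 - e) * z' * (1 - e)
  have hterm : ∀ ij ∈ antidiagonal k,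
      e * ⁅blockSum 𝕜 e p1 p2 q1 q2 f3 ij.1 z, blockSum 𝕜 e p1 p2 q1 q2 f3 ij.2 z'⁆ * (1 - e) =
        (p1 ij.1 a * f3 ij.2 x' - f3 ij.2 x' * q1 ij.1 a) -
          (f3 ij.2 x' * q2 ij.1 b - p2 ij.1 b * f3 ij.2 x') +
        ((f3 ij.1 x * q2 ij.2 b' - p2 ij.2 b' * f3 ij.1 x) -
          (p1 ij.2 a' * f3 ij.1 x - f3 ij.1 x * q1 ij.2 a')) := by
    intro ij _
    obtain ⟨hA, hM, hB'⟩ := hB.peirce_blockSum he ij.1 z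
    obtain ⟨hA', hM', hB''⟩ := hB.peirce_blockSum he ij.2 z'
    rw [peirce_ef_lie he, hA, hM, hB', hA', hM', hB'']
    simp only [add_mul, mul_add]
    abel
  have hswap : ∑ ij ∈ antidiagonal k, ((f3 ij.1 x * q2 ij.2 b' - p2 ij.2 b' * f3 ij.1 x) -
        (p1 ij.2 a' * f3 ij.1 x - f3 ij.1 x * q1 ij.2 a')) =
      ∑ ij ∈ antidiagonal k, ((f3 ij.2 x * q2 ij.1 b' - p2 ij.1 b' * f3 ij.2 x) -
        (p1 ij.1 a' * f3 ij.2 x - f3 ij.2 x * q1 ij.1 a')) := by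
    rw [← Finset.Nat.sum_antidiagonal_swap]
    rfl
  rw [(hB.peirce_blockSum he k _).2.1, peirce_ef_lie he, map_sub, map_add, map_add,
    h3a k hk a ⟨z, rfl⟩ x' ⟨z', rfl⟩, h3b k hk x ⟨z, rfl⟩ b' ⟨z', rfl⟩,
    h3a k hk a' ⟨z', rfl⟩ x ⟨z, rfl⟩, h3b k hk x' ⟨z', rfl⟩ b ⟨z, rfl⟩, Finset.mul_sum,
    Finset.sum_mul, Finset.sum_congr rfl hterm, Finset.sum_add_distrib, hswap]
  simp only [Finset.sum_sub_distrib]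
  abel

theorem isLieHigherDerivation_blockSum (htri : ∀ r : R, (1 - e) * r * e = 0)
    (h0 : blockSum 𝕜 e p1 p2 q1 q2 f3 0 = LinearMap.id)
    (h1a : ∀ k, ∀ a ∈ corner e e, ∀ a' ∈ corner e e,
      p1 k ⁅a, a'⁆ = ∑ ij ∈ antidiagonal k, ⁅p1 ij.1 a, p1 ij.2 a'⁆)
    (h1b : ∀ k, ∀ b ∈ corner (1 - e) (1 - e), ∀ b' ∈ corner (1 - e) (1 - e),
      q2 k ⁅b, b'⁆ = ∑ ij ∈ antidiagonal k, ⁅q2 ij.1 b, q2 ij.2 b'⁆)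
    (h2a : ∀ k, 1 ≤ k → ∀ a ∈ corner e e, ∀ a' ∈ corner e e, q1 k ⁅a, a'⁆ = 0)
    (h2b : ∀ k, 1 ≤ k → ∀ b ∈ corner (1 - e) (1 - e), ∀ b' ∈ corner (1 - e) (1 - e),
      p2 k ⁅b, b'⁆ = 0)
    (h3a : ∀ k, 1 ≤ k → ∀ a ∈ corner e e, ∀ x ∈ corner e (1 - e),
      f3 k (a * x) = ∑ ij ∈ antidiagonal k, (p1 ij.1 a * f3 ij.2 x - f3 ij.2 x * q1 ij.1 a))
    (h3b : ∀ k, 1 ≤ k → ∀ x ∈ corner e (1 - e), ∀ b ∈ corner (1 - e) (1 - e),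
      f3 k (x * b) = ∑ ij ∈ antidiagonal k, (f3 ij.2 x * q2 ij.1 b - p2 ij.1 b * f3 ij.2 x)) :
    IsLieHigherDerivation 𝕜 R (blockSum 𝕜 e p1 p2 q1 q2 f3) := by
  rw [isLieHigherDerivation_iff_lie]
  refine ⟨h0, fun k z z' => ?_⟩
  rcases Nat.eq_zero_or_pos k with rfl | hk
  · simp [h0]
  rw [← peirce_decomposition htri (blockSum 𝕜 e p1 p2 q1 q2 f3 k ⁅z, z'⁆),
    hB.peirce_ee_blockSum_lie he htri h1a h2b hk, hB.peirce_ef_blockSum_lie he h3a h3b hk,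
    hB.peirce_ff_blockSum_lie he htri h1b h2a hk, peirce_decomposition htri]

end IsTriangularBlockData

end BlockSum

section Normalization

variable {𝕜 R : Type*} [CommRing 𝕜] [Ring R] [Algebra 𝕜 R] {e : R} {L : ℕ → Module.End 𝕜 R}

-- `m k` is the `eRf`-component of the terms of `(innerSeries m * L)_k e` other than `⁅m k, e⁆`,
-- whose `eRf`-component is `-m k`.
def normalizingSeq (L : ℕ → Module.End 𝕜 R) (e : R) : ℕ → R
  | k => e * (L k e + ∑ i : Fin k, ⁅normalizingSeq L e i, L (k - i) e⁆) * (1 - e)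

theorem normalizingSeq_mem (k : ℕ) : normalizingSeq L e k ∈ corner e (1 - e) := by
  rw [normalizingSeq]
  exact ⟨_, rfl⟩

theorem normalizingSeq_zero (he : IsIdempotentElem e) (hL0 : L 0 = LinearMap.id) :
    normalizingSeq L e 0 = 0 := by
  rw [normalizingSeq]
  simp [hL0, he.eq, he.mul_one_sub_self]

theorem peirce_ef_coeff_innerSeries_normalizingSeq_mul (he : IsIdempotentElem e)
    (hL0 : L 0 = LinearMap.id) (k : ℕ) :
    e * coeff k (innerSeries 𝕜 (normalizingSeq L e) * mk L) e * (1 - e) = 0 := by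
  set m := normalizingSeq L e with hm_def
  have hm0 : m 0 = 0 := normalizingSeq_zero he hL0
  rcases eq_or_ne k 0 with rfl | hk
  · rw [coeff_innerSeries_mul_apply, coeff_mk, hL0]
    simp [Finset.sum_filter, he.eq, he.mul_one_sub_self]
  have hsum : ∑ ij ∈ (antidiagonal k).filter (fun ij => 1 ≤ ij.2), ⁅m ij.2, L ij.1 e⁆ =
      ∑ i : Fin k, ⁅m i, L (k - i) e⁆ + ⁅m k, e⁆ := by
    rw [Finset.sum_filter_of_ne fun ij _ h => Nat.one_le_iff_ne_zero.mpr fun h0 => by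
        simp [h0, hm0] at h,
      ← Finset.Nat.sum_antidiagonal_swap]
    simp only [Prod.fst_swap, Prod.snd_swap]
    rw [Finset.Nat.sum_antidiagonal_eq_sum_range_succ (fun i j => ⁅m i, L j e⁆),
      Finset.sum_range_succ, Fin.sum_univ_eq_sum_range (fun i => ⁅m i, L (k - i) e⁆),
      Nat.sub_self, hL0]
    rfl
  have hmk : e * ⁅m k, e⁆ * (1 - e) = -m k := by
    rw [← lie_skew, lie_idem_eq_self_of_mem_ef he (normalizingSeq_mem k), mul_neg, neg_mul,
      (peirce_of_mem_ef he (normalizingSeq_mem k)).2.1]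
  simp only [coeff_innerSeries_mul_apply, coeff_mk]
  rw [hsum, ← add_assoc, mul_add, add_mul, hmk, hm_def,
    ← normalizingSeq, add_neg_cancel]

end Normalization

section PeirceBlock

variable {𝕜 R : Type*} [CommRing 𝕜] [Ring R] [Algebra 𝕜 R]

variable (𝕜) in
def peirceBlock (u v u' v' : R) (T : Module.End 𝕜 R) : Module.End 𝕜 R :=
  LinearMap.mulLeftRight 𝕜 (u, v) ∘ₗ T ∘ₗ LinearMap.mulLeftRight 𝕜 (u', v')

theorem peirceBlock_apply (u v u' v' : R) (T : Module.End 𝕜 R) (x : R) :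
    peirceBlock 𝕜 u v u' v' T x = u * T (u' * x * v') * v :=
  rfl

end PeirceBlock

namespace IsLieHigherDerivation

variable {𝕜 R : Type*} [CommRing 𝕜] [Ring R] [Algebra 𝕜 R] {e : R} {D : ℕ → Module.End 𝕜 R}
  (hD : IsLieHigherDerivation 𝕜 R D) (he : IsIdempotentElem e)
include hD he

theorem peirce_ee_apply_eq_zero_of_mem_ef (htri : ∀ r : R, (1 - e) * r * e = 0)
    {x : R} (hx : x ∈ corner e (1 - e)) (k : ℕ) :
    e * D k x * e = 0 := by
  induction k using Nat.strong_induction_on with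
  | _ k ih =>
    rw [← lie_idem_eq_self_of_mem_ef he hx, hD.apply_lie, Finset.mul_sum, Finset.sum_mul,
      Finset.Nat.sum_antidiagonal_eq_of_snd_lt fun i j _ hj => by
        rw [peirce_ee_lie he htri, ih j hj, lie_zero]]
    rw [peirce_ee_lie he htri, hD.1, LinearMap.id_apply, he.eq, he.eq,
      lie_idem_eq_zero_of_mem_ee he ⟨_, rfl⟩]

theorem peirce_ff_apply_eq_zero_of_mem_ef (htri : ∀ r : R, (1 - e) * r * e = 0)
    {x : R} (hx : x ∈ corner e (1 - e)) (k : ℕ) :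
    (1 - e) * D k x * (1 - e) = 0 := by
  induction k using Nat.strong_induction_on with
  | _ k ih =>
    rw [← lie_idem_eq_self_of_mem_ef he hx, hD.apply_lie, Finset.mul_sum, Finset.sum_mul,
      Finset.Nat.sum_antidiagonal_eq_of_snd_lt fun i j _ hj => by
        rw [peirce_ff_lie he htri, ih j hj, lie_zero]]
    rw [peirce_ff_lie he htri, hD.1, LinearMap.id_apply, he.one_sub_mul_self, zero_mul, zero_lie]

theorem apply_mem_ef (htri : ∀ r : R, (1 - e) * r * e = 0)
    {x : R} (hx : x ∈ corner e (1 - e)) (k : ℕ) :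
    D k x ∈ corner e (1 - e) := by
  have h := peirce_decomposition htri (D k x)
  rw [hD.peirce_ee_apply_eq_zero_of_mem_ef he htri hx,
    hD.peirce_ff_apply_eq_zero_of_mem_ef he htri hx,
    zero_add, add_zero] at h
  exact ⟨_, h⟩

theorem peirce_ef_apply_eq_zero_of_lie_idem (hnorm : ∀ i, e * D i e * (1 - e) = 0) {y : R}
    (hy : ⁅e, y⁆ = 0) (k : ℕ) : e * D k y * (1 - e) = 0 := by
  induction k using Nat.strong_induction_on with
  | _ k ih =>
    have h : e * D k ⁅e, y⁆ * (1 - e) = 0 := by rw [hy, map_zero, mul_zero, zero_mul]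
    rw [hD.apply_lie, Finset.mul_sum, Finset.sum_mul,
      Finset.Nat.sum_antidiagonal_eq_of_snd_lt fun i j _ hj => by
        rw [peirce_ef_lie he, ih j hj, hnorm i]; simp,
      peirce_ef_lie he, hD.1, LinearMap.id_apply] at h
    simpa [← mul_assoc, he.eq, he.mul_one_sub_self, he.one_sub_mul_self] using h

theorem lie_peirce_ee_apply_eq_zero (htri : ∀ r : R, (1 - e) * r * e = 0)
    {b : R} (hb : b ∈ corner (1 - e) (1 - e)) (k : ℕ) {a : R}
    (ha : a ∈ corner e e) : ⁅a, e * D k b * e⁆ = 0 := by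
  induction k using Nat.strong_induction_on generalizing a with
  | _ k ih =>
    have h : e * D k ⁅a, b⁆ * e = 0 := by
      rw [lie_eq_zero_of_mem_ee_of_mem_ff he ha hb, map_zero, mul_zero, zero_mul]
    rwa [hD.apply_lie, Finset.mul_sum, Finset.sum_mul,
      Finset.Nat.sum_antidiagonal_eq_of_snd_lt fun i j _ hj => by
        rw [peirce_ee_lie he htri, ih j hj ⟨_, rfl⟩],
      peirce_ee_lie he htri, hD.1, LinearMap.id_apply, (peirce_of_mem_ee he ha).1] at h

theorem lie_peirce_ff_apply_eq_zero (htri : ∀ r : R, (1 - e) * r * e = 0)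
    {a : R} (ha : a ∈ corner e e) (k : ℕ) {b : R}
    (hb : b ∈ corner (1 - e) (1 - e)) : ⁅(1 - e) * D k a * (1 - e), b⁆ = 0 := by
  induction k using Nat.strong_induction_on generalizing b with
  | _ k ih =>
    have h : (1 - e) * D k ⁅a, b⁆ * (1 - e) = 0 := by
      rw [lie_eq_zero_of_mem_ee_of_mem_ff he ha hb, map_zero, mul_zero, zero_mul]
    rwa [hD.apply_lie, Finset.mul_sum, Finset.sum_mul,
      Finset.Nat.sum_antidiagonal_eq_of_fst_lt fun i j _ hi => by
        rw [peirce_ff_lie he htri, ih i hi ⟨_, rfl⟩],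
      peirce_ff_lie he htri, hD.1, LinearMap.id_apply, (peirce_of_mem_ff he hb).2.2] at h

theorem peirceBlock_ee_lie (htri : ∀ r : R, (1 - e) * r * e = 0)
    (k : ℕ) {a a' : R} (ha : a ∈ corner e e) (ha' : a' ∈ corner e e) :
    peirceBlock 𝕜 e e e e (D k) ⁅a, a'⁆ =
      ∑ ij ∈ antidiagonal k,
        ⁅peirceBlock 𝕜 e e e e (D ij.1) a, peirceBlock 𝕜 e e e e (D ij.2) a'⁆ := by
  simp only [peirceBlock_apply, peirce_ee_lie he htri, (peirce_of_mem_ee he ha).1,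
    (peirce_of_mem_ee he ha').1, hD.apply_lie, Finset.mul_sum, Finset.sum_mul]

theorem peirceBlock_ff_lie (htri : ∀ r : R, (1 - e) * r * e = 0)
    (k : ℕ) {b b' : R} (hb : b ∈ corner (1 - e) (1 - e))
    (hb' : b' ∈ corner (1 - e) (1 - e)) :
    peirceBlock 𝕜 (1 - e) (1 - e) (1 - e) (1 - e) (D k) ⁅b, b'⁆ =
      ∑ ij ∈ antidiagonal k, ⁅peirceBlock 𝕜 (1 - e) (1 - e) (1 - e) (1 - e) (D ij.1) b,
        peirceBlock 𝕜 (1 - e) (1 - e) (1 - e) (1 - e) (D ij.2) b'⁆ := by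
  simp only [peirceBlock_apply, peirce_ff_lie he htri, (peirce_of_mem_ff he hb).2.2,
    (peirce_of_mem_ff he hb').2.2, hD.apply_lie, Finset.mul_sum, Finset.sum_mul]

theorem peirceBlock_ff_ee_lie (htri : ∀ r : R, (1 - e) * r * e = 0)
    (k : ℕ) {a a' : R} (ha : a ∈ corner e e)
    (ha' : a' ∈ corner e e) : peirceBlock 𝕜 (1 - e) (1 - e) e e (D k) ⁅a, a'⁆ = 0 := by
  simp only [peirceBlock_apply, peirce_ee_lie he htri, (peirce_of_mem_ee he ha).1,
    (peirce_of_mem_ee he ha').1, hD.apply_lie, Finset.mul_sum, Finset.sum_mul]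
  exact Finset.sum_eq_zero fun ij _ => by
    rw [peirce_ff_lie he htri, hD.lie_peirce_ff_apply_eq_zero he htri ha ij.1 ⟨_, rfl⟩]

theorem peirceBlock_ee_ff_lie (htri : ∀ r : R, (1 - e) * r * e = 0)
    (k : ℕ) {b b' : R} (hb : b ∈ corner (1 - e) (1 - e))
    (hb' : b' ∈ corner (1 - e) (1 - e)) :
    peirceBlock 𝕜 e e (1 - e) (1 - e) (D k) ⁅b, b'⁆ = 0 := by
  simp only [peirceBlock_apply, peirce_ff_lie he htri, (peirce_of_mem_ff he hb).2.2,
    (peirce_of_mem_ff he hb').2.2, hD.apply_lie, Finset.mul_sum, Finset.sum_mul]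
  exact Finset.sum_eq_zero fun ij _ => by
    rw [peirce_ee_lie he htri, hD.lie_peirce_ee_apply_eq_zero he htri hb' ij.2 ⟨_, rfl⟩]

theorem peirceBlock_ef_mul_ee (htri : ∀ r : R, (1 - e) * r * e = 0)
    (hnorm : ∀ i, e * D i e * (1 - e) = 0) (k : ℕ) {a x : R}
    (ha : a ∈ corner e e) (hx : x ∈ corner e (1 - e)) :
    peirceBlock 𝕜 e (1 - e) e (1 - e) (D k) (a * x) =
      ∑ ij ∈ antidiagonal k,
        (peirceBlock 𝕜 e e e e (D ij.1) a * peirceBlock 𝕜 e (1 - e) e (1 - e) (D ij.2) x -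
          peirceBlock 𝕜 e (1 - e) e (1 - e) (D ij.2) x *
            peirceBlock 𝕜 (1 - e) (1 - e) e e (D ij.1) a) := by
  have hax : a * x = ⁅a, x⁆ := by
    rw [Ring.lie_def, mul_eq_zero_of_mem_corner hx ha he.one_sub_mul_self, sub_zero]
  rw [peirceBlock_apply, (peirce_of_mem_ef he (mul_mem_corner ha hx)).2.1, hax, hD.apply_lie,
    Finset.mul_sum, Finset.sum_mul]
  refine Finset.sum_congr rfl fun ij _ => ?_
  rw [peirce_ef_lie he,
    hD.peirce_ef_apply_eq_zero_of_lie_idem he hnorm (lie_idem_eq_zero_of_mem_ee he ha),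
    hD.peirce_ee_apply_eq_zero_of_mem_ef he htri hx]
  simp only [peirceBlock_apply, (peirce_of_mem_ee he ha).1, (peirce_of_mem_ef he hx).2.1,
    zero_mul, mul_zero, add_zero, zero_add]

theorem peirceBlock_ef_mul_ff (htri : ∀ r : R, (1 - e) * r * e = 0)
    (hnorm : ∀ i, e * D i e * (1 - e) = 0) (k : ℕ) {x b : R}
    (hx : x ∈ corner e (1 - e)) (hb : b ∈ corner (1 - e) (1 - e)) :
    peirceBlock 𝕜 e (1 - e) e (1 - e) (D k) (x * b) =
      ∑ ij ∈ antidiagonal k,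
        (peirceBlock 𝕜 e (1 - e) e (1 - e) (D ij.2) x *
            peirceBlock 𝕜 (1 - e) (1 - e) (1 - e) (1 - e) (D ij.1) b -
          peirceBlock 𝕜 e e (1 - e) (1 - e) (D ij.1) b *
            peirceBlock 𝕜 e (1 - e) e (1 - e) (D ij.2) x) := by
  have hxb : x * b = ⁅x, b⁆ := by
    rw [Ring.lie_def, mul_eq_zero_of_mem_corner hb hx he.one_sub_mul_self, sub_zero]
  rw [peirceBlock_apply, (peirce_of_mem_ef he (mul_mem_corner hx hb)).2.1, hxb, hD.apply_lie,
    Finset.mul_sum, Finset.sum_mul, ← Finset.Nat.sum_antidiagonal_swap]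
  refine Finset.sum_congr rfl fun ij _ => ?_
  rw [Prod.fst_swap, Prod.snd_swap, peirce_ef_lie he,
    hD.peirce_ef_apply_eq_zero_of_lie_idem he hnorm (lie_idem_eq_zero_of_mem_ff he hb),
    hD.peirce_ee_apply_eq_zero_of_mem_ef he htri hx]
  simp only [peirceBlock_apply, (peirce_of_mem_ff he hb).2.2, (peirce_of_mem_ef he hx).2.1,
    zero_mul, mul_zero, add_zero, zero_add]

theorem isTriangularBlockData_peirceBlock (htri : ∀ r : R, (1 - e) * r * e = 0) :
    IsTriangularBlockData e (fun k => peirceBlock 𝕜 e e e e (D k))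
      (fun k => peirceBlock 𝕜 e e (1 - e) (1 - e) (D k))
      (fun k => peirceBlock 𝕜 (1 - e) (1 - e) e e (D k))
      (fun k => peirceBlock 𝕜 (1 - e) (1 - e) (1 - e) (1 - e) (D k))
      (fun k => peirceBlock 𝕜 e (1 - e) e (1 - e) (D k)) where
  p1_mem _ _ _ := ⟨_, rfl⟩
  p2_mem k b hb := ⟨⟨_, rfl⟩, fun a ha => by
    rw [← sub_eq_zero, ← neg_eq_zero, neg_sub, ← Ring.lie_def, peirceBlock_apply,
      (peirce_of_mem_ff he hb).2.2, hD.lie_peirce_ee_apply_eq_zero he htri hb k ha]⟩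
  q1_mem k a ha := ⟨⟨_, rfl⟩, fun b hb => by
    rw [← sub_eq_zero, ← Ring.lie_def, peirceBlock_apply, (peirce_of_mem_ee he ha).1,
      hD.lie_peirce_ff_apply_eq_zero he htri ha k hb]⟩
  q2_mem _ _ _ := ⟨_, rfl⟩
  f3_mem _ _ _ := ⟨_, rfl⟩

theorem blockSum_peirceBlock (htri : ∀ r : R, (1 - e) * r * e = 0)
    (hnorm : ∀ i, e * D i e * (1 - e) = 0) :
    blockSum 𝕜 e (fun k => peirceBlock 𝕜 e e e e (D k))
      (fun k => peirceBlock 𝕜 e e (1 - e) (1 - e) (D k))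
      (fun k => peirceBlock 𝕜 (1 - e) (1 - e) e e (D k))
      (fun k => peirceBlock 𝕜 (1 - e) (1 - e) (1 - e) (1 - e) (D k))
      (fun k => peirceBlock 𝕜 e (1 - e) e (1 - e) (D k)) = D := by
  ext k z
  have hdiag : ∀ y, ⁅e, y⁆ = 0 → D k y = e * D k y * e + (1 - e) * D k y * (1 - e) := by
    intro y hy
    conv_lhs => rw [← peirce_decomposition htri (D k y)]
    rw [hD.peirce_ef_apply_eq_zero_of_lie_idem he hnorm hy, add_zero]
  conv_rhs =>
    rw [← peirce_decomposition htri z, map_add, map_add,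
      hdiag _ (lie_idem_eq_zero_of_mem_ee he ⟨z, rfl⟩),
      hdiag _ (lie_idem_eq_zero_of_mem_ff he ⟨z, rfl⟩),
      ← (peirce_of_mem_ef he (hD.apply_mem_ef he htri ⟨z, rfl⟩ k)).2.1]
  simp only [blockSum_apply, peirceBlock_apply, (peirce_of_mem_ee he ⟨z, rfl⟩).1,
    (peirce_of_mem_ef he ⟨z, rfl⟩).2.1, (peirce_of_mem_ff he ⟨z, rfl⟩).2.2]
  abel

end IsLieHigherDerivation

end RingCommutator

section Structure

variable {𝕜 R : Type*} [CommRing 𝕜] [Ring R] [Algebra 𝕜 R]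

def IsTriangularPresentation (e : R) (L : ℕ → R →ₗ[𝕜] R) (m : ℕ → R)
    (p1 p2 q1 q2 f3 : ℕ → R →ₗ[𝕜] R) : Prop :=
  (∀ j, 1 ≤ j → m j ∈ corner e (1 - e)) ∧
  (∀ a ∈ corner e e, p1 0 a = a) ∧
  (∀ b ∈ corner (1 - e) (1 - e), q2 0 b = b) ∧
  (∀ b ∈ corner (1 - e) (1 - e), p2 0 b = 0) ∧
  (∀ a ∈ corner e e, q1 0 a = 0) ∧
  (∀ x ∈ corner e (1 - e), f3 0 x = x) ∧
  (∀ k, 1 ≤ k →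
    (∀ a ∈ corner e e, p1 k a ∈ corner e e) ∧
    (∀ b ∈ corner (1 - e) (1 - e), p2 k b ∈ cornerCenter e) ∧
    (∀ a ∈ corner e e, q1 k a ∈ cornerCenter (1 - e)) ∧
    (∀ b ∈ corner (1 - e) (1 - e), q2 k b ∈ corner (1 - e) (1 - e)) ∧
    (∀ x ∈ corner e (1 - e), f3 k x ∈ corner e (1 - e))) ∧
  (∀ k, 1 ≤ k → ∀ a ∈ corner e e, ∀ x ∈ corner e (1 - e),
    ∀ b ∈ corner (1 - e) (1 - e),
    L k (a + x + b) =
      p1 k a + p2 k b +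
        (∑ ij ∈ (antidiagonal k).filter (fun ij => 1 ≤ ij.2),
          ((p1 ij.1 a + p2 ij.1 b) * m ij.2 -
            m ij.2 * (q1 ij.1 a + q2 ij.1 b))) +
        f3 k x + q1 k a + q2 k b) ∧
  (∀ (k : ℕ), ∀ a ∈ corner e e, ∀ a' ∈ corner e e,
    p1 k (a * a' - a' * a) =
      ∑ ij ∈ antidiagonal k,
        (p1 ij.1 a * p1 ij.2 a' - p1 ij.2 a' * p1 ij.1 a)) ∧
  (∀ (k : ℕ), ∀ b ∈ corner (1 - e) (1 - e), ∀ b' ∈ corner (1 - e) (1 - e),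
    q2 k (b * b' - b' * b) =
      ∑ ij ∈ antidiagonal k,
        (q2 ij.1 b * q2 ij.2 b' - q2 ij.2 b' * q2 ij.1 b)) ∧
  (∀ k, 1 ≤ k → ∀ a ∈ corner e e, ∀ a' ∈ corner e e,
    q1 k (a * a' - a' * a) = 0) ∧
  (∀ k, 1 ≤ k → ∀ b ∈ corner (1 - e) (1 - e), ∀ b' ∈ corner (1 - e) (1 - e),
    p2 k (b * b' - b' * b) = 0) ∧
  (∀ k, 1 ≤ k → ∀ a ∈ corner e e, ∀ x ∈ corner e (1 - e),
    f3 k (a * x) =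
      ∑ ij ∈ antidiagonal k,
        (p1 ij.1 a * f3 ij.2 x - f3 ij.2 x * q1 ij.1 a)) ∧
  (∀ k, 1 ≤ k → ∀ x ∈ corner e (1 - e), ∀ b ∈ corner (1 - e) (1 - e),
    f3 k (x * b) =
      ∑ ij ∈ antidiagonal k,
        (f3 ij.2 x * q2 ij.1 b - p2 ij.1 b * f3 ij.2 x))

theorem IsLieHigherDerivation.exists_isTriangularPresentation {e : R} {L : ℕ → R →ₗ[𝕜] R}
    (hL : IsLieHigherDerivation 𝕜 R L) (he : IsIdempotentElem e)
    (htri : ∀ r : R, (1 - e) * r * e = 0) :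
    ∃ (m : ℕ → R) (p1 p2 q1 q2 f3 : ℕ → R →ₗ[𝕜] R),
      IsTriangularPresentation e L m p1 p2 q1 q2 f3 := by
  set m := normalizingSeq L e
  set Φ := innerSeries 𝕜 m * PowerSeries.mk L
  have hm : ∀ j, 1 ≤ j → m j ∈ corner e (1 - e) := fun j _ => normalizingSeq_mem j
  have hD : IsLieHigherDerivation 𝕜 R (coeff · Φ) :=
    (isLieHigherDerivation_innerSeries he htri hm).mul (by simpa only [coeff_mk] using hL)
  have hnorm : ∀ i, e * coeff i Φ e * (1 - e) = 0 :=
    peirce_ef_coeff_innerSeries_normalizingSeq_mul he hL.1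
  have hB := hD.isTriangularBlockData_peirceBlock he htri
  have hL' : PowerSeries.mk L = innerSeries 𝕜 (-m) * PowerSeries.mk (blockSum 𝕜 e
      (fun k => peirceBlock 𝕜 e e e e (coeff k Φ))
      (fun k => peirceBlock 𝕜 e e (1 - e) (1 - e) (coeff k Φ))
      (fun k => peirceBlock 𝕜 (1 - e) (1 - e) e e (coeff k Φ))
      (fun k => peirceBlock 𝕜 (1 - e) (1 - e) (1 - e) (1 - e) (coeff k Φ))
      (fun k => peirceBlock 𝕜 e (1 - e) e (1 - e) (coeff k Φ))) := by
    rw [hD.blockSum_peirceBlock he htri hnorm, show PowerSeries.mk (coeff · Φ) = Φ from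
      PowerSeries.ext fun k => coeff_mk _ _, ← mul_assoc, innerSeries_neg_mul he htri hm, one_mul]
  have hD0 : ∀ z, coeff 0 Φ z = z := LinearMap.congr_fun hD.1
  refine ⟨m, _, _, _, _, _, hm, fun a ha => ?_, fun b hb => ?_, fun b hb => ?_, fun a ha => ?_,
    fun x hx => ?_, fun k _ => ⟨hB.p1_mem k, hB.p2_mem k, hB.q1_mem k, hB.q2_mem k, hB.f3_mem k⟩,
    fun k _ a ha x hx b hb => ?_, fun k a ha a' ha' => ?_, fun k b hb b' hb' => ?_,
    fun k _ a ha a' ha' => ?_, fun k _ b hb b' hb' => ?_, fun k _ a ha x hx => ?_,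
    fun k _ x hx b hb => ?_⟩
  · simp only [peirceBlock_apply, hD0, (peirce_of_mem_ee he ha).1]
  · simp only [peirceBlock_apply, hD0, (peirce_of_mem_ff he hb).2.2]
  · simp only [peirceBlock_apply, hD0, (peirce_of_mem_ff he hb).2.2, (peirce_of_mem_ff he hb).1]
  · simp only [peirceBlock_apply, hD0, (peirce_of_mem_ee he ha).1, (peirce_of_mem_ee he ha).2.2]
  · simp only [peirceBlock_apply, hD0, (peirce_of_mem_ef he hx).2.1]
  · rw [← coeff_mk k L, hL', hB.coeff_innerSeries_neg_mul_blockSum_apply he htri hm k ha hx hb]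
  · simpa only [Ring.lie_def] using hD.peirceBlock_ee_lie he htri k ha ha'
  · simpa only [Ring.lie_def] using hD.peirceBlock_ff_lie he htri k hb hb'
  · simpa only [Ring.lie_def] using hD.peirceBlock_ff_ee_lie he htri k ha ha'
  · simpa only [Ring.lie_def] using hD.peirceBlock_ee_ff_lie he htri k hb hb'
  · exact hD.peirceBlock_ef_mul_ee he htri hnorm k ha hx
  · exact hD.peirceBlock_ef_mul_ff he htri hnorm k hx hb

theorem IsTriangularPresentation.isLieHigherDerivation {e : R} {L : ℕ → R →ₗ[𝕜] R} {m : ℕ → R}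
    {p1 p2 q1 q2 f3 : ℕ → R →ₗ[𝕜] R} (h : IsTriangularPresentation e L m p1 p2 q1 q2 f3)
    (he : IsIdempotentElem e) (htri : ∀ r : R, (1 - e) * r * e = 0)
    (hL0 : L 0 = LinearMap.id) : IsLieHigherDerivation 𝕜 R L := by
  obtain ⟨hm, hp10, hq20, hp20, hq10, hf30, hrange, hpres, h1a, h1b, h2a, h2b, h3a, h3b⟩ := h
  have hB : IsTriangularBlockData e p1 p2 q1 q2 f3 := by
    refine ⟨fun i => ?_, fun i => ?_, fun i => ?_, fun i => ?_, fun i => ?_⟩ <;>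
      rcases Nat.eq_zero_or_pos i with rfl | hi
    · exact fun a ha => (hp10 a ha).symm ▸ ha
    · exact (hrange i hi).1
    · exact fun b hb => (hp20 b hb).symm ▸ zero_mem_cornerCenter
    · exact (hrange i hi).2.1
    · exact fun a ha => (hq10 a ha).symm ▸ zero_mem_cornerCenter
    · exact (hrange i hi).2.2.1
    · exact fun b hb => (hq20 b hb).symm ▸ hb
    · exact (hrange i hi).2.2.2.1
    · exact fun x hx => (hf30 x hx).symm ▸ hx
    · exact (hrange i hi).2.2.2.2
  have h0 : blockSum 𝕜 e p1 p2 q1 q2 f3 0 = LinearMap.id := LinearMap.ext fun z => by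
    rw [blockSum_apply, hp10 _ ⟨z, rfl⟩, hp20 _ ⟨z, rfl⟩, hf30 _ ⟨z, rfl⟩, hq10 _ ⟨z, rfl⟩,
      hq20 _ ⟨z, rfl⟩, add_zero, add_zero, LinearMap.id_apply, peirce_decomposition htri]
  have hD := hB.isLieHigherDerivation_blockSum he htri h0 (by simpa only [Ring.lie_def] using h1a)
    (by simpa only [Ring.lie_def] using h1b) (by simpa only [Ring.lie_def] using h2a)
    (by simpa only [Ring.lie_def] using h2b) h3a h3b
  have hL : L = fun k =>
      coeff k (innerSeries 𝕜 (-m) * PowerSeries.mk (blockSum 𝕜 e p1 p2 q1 q2 f3)) := by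
    funext k
    refine LinearMap.ext fun z => ?_
    rcases Nat.eq_zero_or_pos k with rfl | hk
    · rw [coeff_innerSeries_mul_apply, coeff_mk, h0, hL0]
      simp [Finset.sum_filter]
    · rw [← peirce_decomposition htri z, hpres k hk _ ⟨z, rfl⟩ _ ⟨z, rfl⟩ _ ⟨z, rfl⟩,
        hB.coeff_innerSeries_neg_mul_blockSum_apply he htri hm k ⟨z, rfl⟩ ⟨z, rfl⟩ ⟨z, rfl⟩]
  rw [hL]
  exact (isLieHigherDerivation_innerSeries he htri fun j hj => neg_mem_corner (hm j hj)).mul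
    (by simpa only [coeff_mk] using hD)

end Structure

theorem triangular_lieHigherDerivation_structure_general {𝕜 R : Type*} [CommRing 𝕜] [Ring R]
    [Algebra 𝕜 R]
    (e : R) (he : e * e = e)
    (htri : ∀ r : R, (1 - e) * r * e = 0)
    (L : ℕ → R →ₗ[𝕜] R) (hL0 : L 0 = LinearMap.id) :
    IsLieHigherDerivation 𝕜 R L ↔
      ∃ (m : ℕ → R) (p1 p2 q1 q2 f3 : ℕ → R →ₗ[𝕜] R),
        -- the elements `m j ∈ M` for `j ≥ 1`
        (∀ j, 1 ≤ j → m j ∈ corner e (1 - e)) ∧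
        -- conventions at index 0
        (∀ a ∈ corner e e, p1 0 a = a) ∧
        (∀ b ∈ corner (1 - e) (1 - e), q2 0 b = b) ∧
        (∀ b ∈ corner (1 - e) (1 - e), p2 0 b = 0) ∧
        (∀ a ∈ corner e e, q1 0 a = 0) ∧
        (∀ x ∈ corner e (1 - e), f3 0 x = x) ∧
        -- ranges of the entry maps
        (∀ k, 1 ≤ k →
          (∀ a ∈ corner e e, p1 k a ∈ corner e e) ∧
          (∀ b ∈ corner (1 - e) (1 - e), p2 k b ∈ cornerCenter e) ∧
          (∀ a ∈ corner e e, q1 k a ∈ cornerCenter (1 - e)) ∧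
          (∀ b ∈ corner (1 - e) (1 - e), q2 k b ∈ corner (1 - e) (1 - e)) ∧
          (∀ x ∈ corner e (1 - e), f3 k x ∈ corner e (1 - e))) ∧
        -- (0): the presentation of `L k`
        (∀ k, 1 ≤ k → ∀ a ∈ corner e e, ∀ x ∈ corner e (1 - e),
          ∀ b ∈ corner (1 - e) (1 - e),
          L k (a + x + b) =
            p1 k a + p2 k b +
              (∑ ij ∈ (Finset.HasAntidiagonal.antidiagonal k).filter (fun ij => 1 ≤ ij.2),
                ((p1 ij.1 a + p2 ij.1 b) * m ij.2 -
                  m ij.2 * (q1 ij.1 a + q2 ij.1 b))) +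
              f3 k x + q1 k a + q2 k b) ∧
        -- (1): `p1` and `q2` are Lie higher derivations on `A` resp. `B`
        (∀ (k : ℕ), ∀ a ∈ corner e e, ∀ a' ∈ corner e e,
          p1 k (a * a' - a' * a) =
            ∑ ij ∈ Finset.HasAntidiagonal.antidiagonal k,
              (p1 ij.1 a * p1 ij.2 a' - p1 ij.2 a' * p1 ij.1 a)) ∧
        (∀ (k : ℕ), ∀ b ∈ corner (1 - e) (1 - e), ∀ b' ∈ corner (1 - e) (1 - e),
          q2 k (b * b' - b' * b) =
            ∑ ij ∈ Finset.HasAntidiagonal.antidiagonal k,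
              (q2 ij.1 b * q2 ij.2 b' - q2 ij.2 b' * q2 ij.1 b)) ∧
        -- (2): `q1` and `p2` vanish on commutators
        (∀ k, 1 ≤ k → ∀ a ∈ corner e e, ∀ a' ∈ corner e e,
          q1 k (a * a' - a' * a) = 0) ∧
        (∀ k, 1 ≤ k → ∀ b ∈ corner (1 - e) (1 - e), ∀ b' ∈ corner (1 - e) (1 - e),
          p2 k (b * b' - b' * b) = 0) ∧
        -- (3): the module equations for `f3`
        (∀ k, 1 ≤ k → ∀ a ∈ corner e e, ∀ x ∈ corner e (1 - e),
          f3 k (a * x) =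
            ∑ ij ∈ Finset.HasAntidiagonal.antidiagonal k,
              (p1 ij.1 a * f3 ij.2 x - f3 ij.2 x * q1 ij.1 a)) ∧
        (∀ k, 1 ≤ k → ∀ x ∈ corner e (1 - e), ∀ b ∈ corner (1 - e) (1 - e),
          f3 k (x * b) =
            ∑ ij ∈ Finset.HasAntidiagonal.antidiagonal k,
              (f3 ij.2 x * q2 ij.1 b - p2 ij.1 b * f3 ij.2 x)) :=
  ⟨fun hL => hL.exists_isTriangularPresentation he htri,
    fun ⟨_, _, _, _, _, _, h⟩ => IsTriangularPresentation.isLieHigherDerivation h he htri hL0⟩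

/-- structure of Lie higher derivations on a triangular algebra,
Peirce form, `fRe = 0`, `A = eRe`, `B = fRf`, `M = eRf`. -/
theorem triangular_lieHigherDerivation_structure {𝕜 R : Type*} [CommRing 𝕜] [Ring R]
    [Algebra 𝕜 R]
    (e : R) (he : e * e = e) (he0 : e ≠ 0) (he1 : e ≠ 1)
    (htri : ∀ r : R, (1 - e) * r * e = 0)
    (L : ℕ → R →ₗ[𝕜] R) (hL0 : L 0 = LinearMap.id) :
    IsLieHigherDerivation 𝕜 R L ↔
      ∃ (m : ℕ → R) (p1 p2 q1 q2 f3 : ℕ → R →ₗ[𝕜] R),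
        -- the elements `m j ∈ M` for `j ≥ 1`
        (∀ j, 1 ≤ j → m j ∈ corner e (1 - e)) ∧
        -- conventions at index 0
        (∀ a ∈ corner e e, p1 0 a = a) ∧
        (∀ b ∈ corner (1 - e) (1 - e), q2 0 b = b) ∧
        (∀ b ∈ corner (1 - e) (1 - e), p2 0 b = 0) ∧
        (∀ a ∈ corner e e, q1 0 a = 0) ∧
        (∀ x ∈ corner e (1 - e), f3 0 x = x) ∧
        -- ranges of the entry maps
        (∀ k, 1 ≤ k →
          (∀ a ∈ corner e e, p1 k a ∈ corner e e) ∧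
          (∀ b ∈ corner (1 - e) (1 - e), p2 k b ∈ cornerCenter e) ∧
          (∀ a ∈ corner e e, q1 k a ∈ cornerCenter (1 - e)) ∧
          (∀ b ∈ corner (1 - e) (1 - e), q2 k b ∈ corner (1 - e) (1 - e)) ∧
          (∀ x ∈ corner e (1 - e), f3 k x ∈ corner e (1 - e))) ∧
        -- (0): the presentation of `L k`
        (∀ k, 1 ≤ k → ∀ a ∈ corner e e, ∀ x ∈ corner e (1 - e),
          ∀ b ∈ corner (1 - e) (1 - e),
          L k (a + x + b) =
            p1 k a + p2 k b +
              (∑ ij ∈ (Finset.HasAntidiagonal.antidiagonal k).filter (fun ij => 1 ≤ ij.2),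
                ((p1 ij.1 a + p2 ij.1 b) * m ij.2 -
                  m ij.2 * (q1 ij.1 a + q2 ij.1 b))) +
              f3 k x + q1 k a + q2 k b) ∧
        -- (1): `p1` and `q2` are Lie higher derivations on `A` resp. `B`
        (∀ (k : ℕ), ∀ a ∈ corner e e, ∀ a' ∈ corner e e,
          p1 k (a * a' - a' * a) =
            ∑ ij ∈ Finset.HasAntidiagonal.antidiagonal k,
              (p1 ij.1 a * p1 ij.2 a' - p1 ij.2 a' * p1 ij.1 a)) ∧
        (∀ (k : ℕ), ∀ b ∈ corner (1 - e) (1 - e), ∀ b' ∈ corner (1 - e) (1 - e),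
          q2 k (b * b' - b' * b) =
            ∑ ij ∈ Finset.HasAntidiagonal.antidiagonal k,
              (q2 ij.1 b * q2 ij.2 b' - q2 ij.2 b' * q2 ij.1 b)) ∧
        -- (2): `q1` and `p2` vanish on commutators
        (∀ k, 1 ≤ k → ∀ a ∈ corner e e, ∀ a' ∈ corner e e,
          q1 k (a * a' - a' * a) = 0) ∧
        (∀ k, 1 ≤ k → ∀ b ∈ corner (1 - e) (1 - e), ∀ b' ∈ corner (1 - e) (1 - e),
          p2 k (b * b' - b' * b) = 0) ∧
        -- (3): the module equations for `f3`
        (∀ k, 1 ≤ k → ∀ a ∈ corner e e, ∀ x ∈ corner e (1 - e),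
          f3 k (a * x) =
            ∑ ij ∈ Finset.HasAntidiagonal.antidiagonal k,
              (p1 ij.1 a * f3 ij.2 x - f3 ij.2 x * q1 ij.1 a)) ∧
        (∀ k, 1 ≤ k → ∀ x ∈ corner e (1 - e), ∀ b ∈ corner (1 - e) (1 - e),
          f3 k (x * b) =
            ∑ ij ∈ Finset.HasAntidiagonal.antidiagonal k,
              (f3 ij.2 x * q2 ij.1 b - p2 ij.1 b * f3 ij.2 x)) :=
  triangular_lieHigherDerivation_structure_general e he htri L hL0
end

section
/- Let A be a unital algebra over a commutative unital ring 𝕜, let D = {D_k}_{k∈ℕ₀} be a higher derivation on A, and let τ = {τ_k}_{k∈ℕ} be a sequence of 𝕜-linear maps on A with τ_k(A) ⊆ Z(A) for all k ≥ 1. Define L_0 = id_A and L_k = D_k + τ_k for k ≥ 1. Then L = {L_k}_{k∈ℕ₀} is a Lie higher derivation on A if and only if τ_k([x,y]) = 0 for all x, y ∈ A and all k ≥ 1. -/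
open Finset

theorem commutator_add_mem_center {A : Type*} [NonUnitalRing A] {a b c d : A}
    (hc : c ∈ Set.center A) (hd : d ∈ Set.center A) :
    (a + c) * (b + d) - (b + d) * (a + c) = a * b - b * a := by
  have hcb : c * b = b * c := (Set.mem_center_iff.1 hc).comm b
  have hcd : c * d = d * c := (Set.mem_center_iff.1 hc).comm d
  have hda : d * a = a * d := (Set.mem_center_iff.1 hd).comm a
  simp only [mul_add, add_mul, hcb, hcd, hda]
  abel

theorem IsHigherDerivation.map_commutator {𝕜 A : Type*} [CommRing 𝕜] [Ring A] [Algebra 𝕜 A]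
    {D : ℕ → A →ₗ[𝕜] A} (hD : IsHigherDerivation 𝕜 A D) (k : ℕ) (x y : A) :
    D k (x * y - y * x) =
      ∑ ij ∈ antidiagonal k, (D ij.1 x * D ij.2 y - D ij.2 y * D ij.1 x) := by
  have hswap : ∑ ij ∈ antidiagonal k, D ij.1 y * D ij.2 x =
      ∑ ij ∈ antidiagonal k, D ij.2 y * D ij.1 x :=
    Nat.sum_antidiagonal_swap (f := fun ij => D ij.2 y * D ij.1 x)
  rw [map_sub, hD.2, hD.2, hswap, sum_sub_distrib]

theorem IsHigherDerivation.sum_commutator_eq_of_sub_mem_center {𝕜 A : Type*} [CommRing 𝕜]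
    [Ring A] [Algebra 𝕜 A] {D L : ℕ → A →ₗ[𝕜] A} (hD : IsHigherDerivation 𝕜 A D)
    (hLD : ∀ i x, L i x - D i x ∈ Set.center A) (k : ℕ) (x y : A) :
    ∑ ij ∈ antidiagonal k, (L ij.1 x * L ij.2 y - L ij.2 y * L ij.1 x) =
      D k (x * y - y * x) := by
  have hcomm : ∀ i j, L i x * L j y - L j y * L i x = D i x * D j y - D j y * D i x := by
    intro i j
    rw [← add_sub_cancel (D i x) (L i x), ← add_sub_cancel (D j y) (L j y)]
    exact commutator_add_mem_center (hLD i x) (hLD j y)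
  rw [sum_congr rfl fun ij _ => hcomm ij.1 ij.2, hD.map_commutator]

/-- If `D` is a higher derivation on `A` and `τ k` (k ≥ 1) are
central-valued linear maps, then `L` with `L 0 = id` and `L k = D k + τ k` (k ≥ 1) is a
Lie higher derivation iff each `τ k` vanishes on all commutators. -/
theorem lieHigherDerivation_iff_tau_vanishes {𝕜 A : Type*} [CommRing 𝕜] [Ring A]
    [Algebra 𝕜 A]
    (D : ℕ → A →ₗ[𝕜] A) (hD : IsHigherDerivation 𝕜 A D)
    (τ : ℕ → A →ₗ[𝕜] A) (hτ : ∀ k, 1 ≤ k → ∀ x : A, τ k x ∈ Set.center A)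
    (L : ℕ → A →ₗ[𝕜] A) (hL0 : L 0 = LinearMap.id)
    (hLk : ∀ k, 1 ≤ k → L k = D k + τ k) :
    IsLieHigherDerivation 𝕜 A L ↔
      ∀ k, 1 ≤ k → ∀ x y : A, τ k (x * y - y * x) = 0 := by
  have hLD : ∀ i x, L i x - D i x ∈ Set.center A := by
    intro i x
    rcases Nat.eq_zero_or_pos i with rfl | hi
    · simp [hL0, hD.1, Set.zero_mem_center]
    · simpa [hLk i hi] using hτ i hi x
  have hdefect : ∀ k, 1 ≤ k → ∀ x y : A,
      L k (x * y - y * x) = ∑ ij ∈ antidiagonal k,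
        (L ij.1 x * L ij.2 y - L ij.2 y * L ij.1 x) + τ k (x * y - y * x) := by
    intro k hk x y
    rw [hD.sum_commutator_eq_of_sub_mem_center hLD, hLk k hk, LinearMap.add_apply]
  rw [IsLieHigherDerivation, and_iff_right hL0]
  constructor
  · intro hLie k hk x y
    simpa [← hLie k x y] using (hdefect k hk x y).symm
  · intro hτ0 k x y
    rcases Nat.eq_zero_or_pos k with rfl | hk
    · simp [hL0]
    · rw [hdefect k hk, hτ0 k hk, add_zero]
end

section
/- Let 𝕜 be a commutative unital ring and let R be a 2-torsion free unital 𝕜-algebra with an idempotent e satisfying e ≠ 0 and e ≠ 1; put f = 1 − e. If L = {L_k}_{k∈ℕ₀} is a Lie higher derivation on R, then the off-diagonal Peirce components of L_k(1) vanish for every k ∈ ℕ₀: e·L_k(1)·f = 0 and f·L_k(1)·e = 0. -/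
open Finset

/-! The commutator identity in degree `n` at `(1, x)` has left side `L n [1, x] = 0`; by
strong induction every term `[L i 1, L j x]` with `0 < i < n` vanishes, and so does every term
with `i = 0` since `L 0 1 = 1`, leaving `[L n 1, x] = 0`. Hence each `L n 1` is central, and a
central element has no off-diagonal Peirce components. -/

theorem Commute.mul_mul_eq_zero {M : Type*} [SemigroupWithZero M] {a b c : M}
    (hc : Commute a c) (hab : a * b = 0) : a * c * b = 0 := by
  rw [hc.eq, mul_assoc, hab, mul_zero]

namespace IsLieHigherDerivation

variable {𝕜 R : Type*} [CommRing 𝕜] [Ring R] [Algebra 𝕜 R] {L : ℕ → R →ₗ[𝕜] R}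

theorem zero_apply (hL : IsLieHigherDerivation 𝕜 R L) (x : R) : L 0 x = x := by
  rw [hL.1, LinearMap.id_apply]

theorem commute_apply_one (hL : IsLieHigherDerivation 𝕜 R L) (n : ℕ) (x : R) :
    Commute (L n 1) x := by
  induction n using Nat.strong_induction_on generalizing x with
  | _ n ih =>
    have hsum : ∑ ij ∈ antidiagonal n, (L ij.1 1 * L ij.2 x - L ij.2 x * L ij.1 1) =
        L n 1 * x - x * L n 1 := by
      rw [sum_eq_single (n, 0)]
      · rw [hL.zero_apply]
      · rintro ⟨i, j⟩ hij hne
        obtain rfl | hi := Nat.eq_zero_or_pos i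
        · rw [hL.zero_apply, one_mul, mul_one, sub_self]
        · have hin : i < n := by
            rw [HasAntidiagonal.mem_antidiagonal] at hij
            have : j ≠ 0 := fun hj => hne (by simp [hj, ← hij])
            omega
          exact sub_eq_zero.mpr (ih i hin _).eq
      · simp
    have h := hL.2 n 1 x
    rw [one_mul, mul_one, sub_self, map_zero, hsum] at h
    exact sub_eq_zero.mp h.symm

end IsLieHigherDerivation

theorem offdiagonal_of_one_vanishes_general {𝕜 R : Type*} [CommRing 𝕜] [Ring R] [Algebra 𝕜 R]
    (e : R) (he : e * e = e)
    (L : ℕ → R →ₗ[𝕜] R) (hL : IsLieHigherDerivation 𝕜 R L) (k : ℕ) :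
    e * L k 1 * (1 - e) = 0 ∧ (1 - e) * L k 1 * e = 0 := by
  have hc : ∀ a : R, Commute a (L k 1) := fun a => (hL.commute_apply_one k a).symm
  exact ⟨(hc e).mul_mul_eq_zero (IsIdempotentElem.mul_one_sub_self he),
    (hc (1 - e)).mul_mul_eq_zero (IsIdempotentElem.one_sub_mul_self he)⟩

/-- For a Lie higher derivation `L` on a 2-torsion free unital
`𝕜`-algebra `R` with a nontrivial idempotent `e`, the off-diagonal Peirce components of
`L k 1` vanish: `e ⬝ L k 1 ⬝ f = 0` and `f ⬝ L k 1 ⬝ e = 0` where `f = 1 - e`. -/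
theorem offdiagonal_of_one_vanishes {𝕜 R : Type*} [CommRing 𝕜] [Ring R] [Algebra 𝕜 R]
    (htf : ∀ x : R, x + x = 0 → x = 0)
    (e : R) (he : e * e = e) (he0 : e ≠ 0) (he1 : e ≠ 1)
    (L : ℕ → R →ₗ[𝕜] R) (hL : IsLieHigherDerivation 𝕜 R L) (k : ℕ) :
    e * L k 1 * (1 - e) = 0 ∧ (1 - e) * L k 1 * e = 0 :=
  offdiagonal_of_one_vanishes_general e he L hL k
end
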